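/- arXiv:0802.1111 — 6 statements merged into one kernel-verified Lean document; each statement's English description precedes it below -/
import Mathlib

section
/- Let Ω ⊆ ℝⁿ be open, let b : Ω → ℝ be twice continuously differentiable, and suppose there exists p₀ > 0 such that −Δb(x) + (p₀/2)|∇b(x)|² ≥ 0 for all x ∈ Ω. Then for every nonempty bounded open set Ω' whose closure is contained in Ω, the minimum of b over the closure of Ω' equals the minimum of b over the topological boundary of Ω'. -/
/-!
The function `u = exp (-p₀ b)` satisfies `Δu = p₀ e^{-p₀ b} (-Δb + p₀ |∇b|²) ≥ 0`, so it is
subharmonic on `Ω'`. By the weak maximum principle `u` attains its maximum over the closure of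
`Ω'` on the frontier, and a maximum of `u` is a minimum of `b`. The maximum principle is reduced
to the strict one by replacing `u` with `u + ε |x|²`, whose Laplacian is positive and which
therefore has no interior maximum by the second derivative test; then `ε → 0`.
-/

/-- The Laplacian `Δb(x) = ∑ i, ∂²b/∂xᵢ²(x)`. -/
noncomputable def lap {n : ℕ} (b : EuclideanSpace ℝ (Fin n) → ℝ)
    (x : EuclideanSpace ℝ (Fin n)) : ℝ :=
  ∑ i : Fin n, fderiv ℝ (fun y => fderiv ℝ b y (EuclideanSpace.single i 1)) x
      (EuclideanSpace.single i 1)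

open Set Filter Topology

section SecondDerivative

variable {E : Type*} [NormedAddCommGroup E] [NormedSpace ℝ E] {w : E → ℝ} {x : E}

theorem ContDiffAt.eventually_differentiableAt (hw : ContDiffAt ℝ 2 w x) :
    ∀ᶠ y in 𝓝 x, DifferentiableAt ℝ w y :=
  (hw.eventually (by simp)).mono fun _ hy => hy.differentiableAt (by norm_num)

theorem ContDiffAt.differentiableAt_fderiv_apply (hw : ContDiffAt ℝ 2 w x) (v : E) :
    DifferentiableAt ℝ (fun y => fderiv ℝ w y v) x :=
  ((hw.fderiv_right (m := 1) le_rfl).differentiableAt one_ne_zero).clm_apply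
    (differentiableAt_const v)

theorem ContDiffAt.deriv_deriv_comp_add_smul (hw : ContDiffAt ℝ 2 w x) (v : E) :
    deriv (deriv fun t : ℝ => w (x + t • v)) 0 =
      fderiv ℝ (fun y => fderiv ℝ w y v) x v := by
  have hline : ∀ t : ℝ, HasDerivAt (fun t : ℝ => x + t • v) v t := fun t => by
    simpa using ((hasDerivAt_id t).smul_const v).const_add x
  have hcont : Tendsto (fun t : ℝ => x + t • v) (𝓝 0) (𝓝 x) := by
    simpa using (hline 0).continuousAt.tendsto
  have hderiv : (deriv fun t : ℝ => w (x + t • v)) =ᶠ[𝓝 0]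
      fun t => fderiv ℝ w (x + t • v) v := by
    filter_upwards [hcont.eventually hw.eventually_differentiableAt] with t ht
    exact (ht.hasFDerivAt.comp_hasDerivAt t (hline t)).deriv
  rw [hderiv.deriv_eq]
  exact ((hw.differentiableAt_fderiv_apply v).hasFDerivAt.comp_hasDerivAt_of_eq (0 : ℝ)
    (hline 0) (by simp)).deriv

theorem IsLocalMax.fderiv_fderiv_apply_nonpos (hmax : IsLocalMax w x)
    (hw : ContDiffAt ℝ 2 w x) (v : E) : fderiv ℝ (fun y => fderiv ℝ w y v) x v ≤ 0 := by
  set h : ℝ → ℝ := fun t => w (x + t • v)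
  have hcont : ContinuousAt (fun t : ℝ => x + t • v) 0 := by fun_prop
  have hmax' : IsLocalMax h 0 := IsLocalMax.comp_continuous (by simpa using hmax) hcont
  rw [← hw.deriv_deriv_comp_add_smul v]
  by_contra! hpos
  -- A positive second derivative would make `0` also a local minimum, so `h` is locally constant.
  have hmin : IsLocalMin h 0 := isLocalMin_of_deriv_deriv_pos hpos hmax'.deriv_eq_zero
    (hw.continuousAt.comp_of_eq hcont (by simp))
  have hconst : h =ᶠ[𝓝 0] fun _ => h 0 := by
    filter_upwards [hmin, hmax'] with t h₁ h₂ using le_antisymm h₂ h₁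
  have hzero : deriv (deriv h) 0 = 0 := by
    rw [hconst.deriv.deriv_eq]
    simp
  exact hpos.ne' hzero

end SecondDerivative

theorem EuclideanSpace.norm_sq_eq_sum_sq_apply_single {ι : Type*} [Fintype ι] [DecidableEq ι]
    (f : EuclideanSpace ℝ ι →L[ℝ] ℝ) :
    ‖f‖ ^ 2 = ∑ i, f (EuclideanSpace.single i 1) ^ 2 := by
  have hf : ∀ i, f (EuclideanSpace.single i 1) =
      (InnerProductSpace.toDual ℝ (EuclideanSpace ℝ ι)).symm f i := fun i => by
    rw [← InnerProductSpace.toDual_symm_apply, EuclideanSpace.inner_single_right]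
    simp
  rw [← (InnerProductSpace.toDual ℝ _).symm.norm_map f, EuclideanSpace.norm_sq_eq]
  simp [hf]

section Laplacian

variable {n : ℕ} {f g : EuclideanSpace ℝ (Fin n) → ℝ} {x : EuclideanSpace ℝ (Fin n)}

theorem lap_add (hf : ContDiffAt ℝ 2 f x) (hg : ContDiffAt ℝ 2 g x) :
    lap (f + g) x = lap f x + lap g x := by
  have hsum : ∀ v, (fun y => fderiv ℝ (f + g) y v) =ᶠ[𝓝 x]
      (fun y => fderiv ℝ f y v) + fun y => fderiv ℝ g y v := fun v => by
    filter_upwards [hf.eventually_differentiableAt, hg.eventually_differentiableAt]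
      with y hfy hgy
    simp [fderiv_add hfy hgy]
  simp only [lap, ← Finset.sum_add_distrib]
  refine Finset.sum_congr rfl fun i _ => ?_
  rw [(hsum _).fderiv_eq, fderiv_add (hf.differentiableAt_fderiv_apply _)
    (hg.differentiableAt_fderiv_apply _)]
  rfl

theorem lap_const_mul_norm_sq (ε : ℝ) :
    lap (fun z : EuclideanSpace ℝ (Fin n) => ε * ‖z‖ ^ 2) x = 2 * n * ε := by
  have hdir : ∀ i, (fun y => fderiv ℝ (fun z : EuclideanSpace ℝ (Fin n) => ε * ‖z‖ ^ 2) y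
      (EuclideanSpace.single i 1)) = fun y => 2 * ε * y i := fun i => by
    ext y
    rw [((hasStrictFDerivAt_norm_sq y).hasFDerivAt.const_mul ε).fderiv]
    simp only [smul_apply, coe_innerSL_apply,
      EuclideanSpace.inner_single_right, Real.ringHom_apply, one_mul, nsmul_eq_mul,
      Nat.cast_ofNat, smul_eq_mul]
    ring
  have hcoord : ∀ i, HasFDerivAt (fun y : EuclideanSpace ℝ (Fin n) => 2 * ε * y i)
      ((2 * ε) • (EuclideanSpace.proj i : EuclideanSpace ℝ (Fin n) →L[ℝ] ℝ)) x := fun i =>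
    (EuclideanSpace.proj (𝕜 := ℝ) i).hasFDerivAt.const_mul _
  simp only [lap, hdir, fun i => (hcoord i).fderiv, smul_apply,
    PiLp.proj_apply, PiLp.single_eq_same, smul_eq_mul, mul_one, Finset.sum_const,
    Finset.card_univ, Fintype.card_fin, nsmul_eq_mul]
  ring

theorem lap_exp_const_mul (hf : ContDiffAt ℝ 2 f x) (c : ℝ) :
    lap (fun z => Real.exp (c * f z)) x =
      Real.exp (c * f x) * (c * lap f x + c ^ 2 * ‖fderiv ℝ f x‖ ^ 2) := by
  have hexp : ∀ {y}, DifferentiableAt ℝ f y → HasFDerivAt (fun z => Real.exp (c * f z))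
      (Real.exp (c * f y) • c • fderiv ℝ f y) y := fun hy =>
    (hy.hasFDerivAt.const_mul c).exp
  have hdir : ∀ v, (fun y => fderiv ℝ (fun z => Real.exp (c * f z)) y v) =ᶠ[𝓝 x]
      fun y => Real.exp (c * f y) * (c * fderiv ℝ f y v) := fun v => by
    filter_upwards [hf.eventually_differentiableAt] with y hy
    simp [(hexp hy).fderiv]
  have hterm : ∀ v, fderiv ℝ (fun y => fderiv ℝ (fun z => Real.exp (c * f z)) y v) x v =
      Real.exp (c * f x) * (c * fderiv ℝ (fun y => fderiv ℝ f y v) x v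
        + c ^ 2 * fderiv ℝ f x v ^ 2) := fun v => by
    have hprod : HasFDerivAt (fun y => Real.exp (c * f y) * (c * fderiv ℝ f y v))
        (Real.exp (c * f x) • c • fderiv ℝ (fun y => fderiv ℝ f y v) x +
          (c * fderiv ℝ f x v) • Real.exp (c * f x) • c • fderiv ℝ f x) x :=
      (hexp (hf.differentiableAt (by norm_num))).mul
        ((hf.differentiableAt_fderiv_apply v).hasFDerivAt.const_mul c)
    rw [(hdir v).fderiv_eq, hprod.fderiv]
    simp only [add_apply, smul_apply, smul_eq_mul]
    ring
  simp only [lap, hterm, ← Finset.mul_sum, Finset.sum_add_distrib,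
    EuclideanSpace.norm_sq_eq_sum_sq_apply_single]

end Laplacian

theorem Bornology.IsBounded.nonempty_frontier {E : Type*} [NormedAddCommGroup E]
    [NormedSpace ℝ E] [Nontrivial E] {s : Set E} (hbd : Bornology.IsBounded s)
    (hne : s.Nonempty) : (frontier s).Nonempty :=
  nonempty_frontier_iff.mpr ⟨hne, fun huniv => NormedSpace.unbounded_univ ℝ E (huniv ▸ hbd)⟩

theorem IsMinOn.csInf_image_eq_of_subset {α β : Type*} [ConditionallyCompleteLattice β]
    {f : α → β} {s t : Set α} {z : α} (hmin : IsMinOn f t z) (hst : s ⊆ t) (hz : z ∈ s) :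
    sInf (f '' t) = sInf (f '' s) := by
  have ht : IsLeast (f '' t) (f z) := ⟨mem_image_of_mem f (hst hz), forall_mem_image.2 hmin⟩
  have hs : IsLeast (f '' s) (f z) :=
    ⟨mem_image_of_mem f hz, forall_mem_image.2 fun x hx => hmin (hst hx)⟩
  rw [ht.csInf_eq, hs.csInf_eq]

section MaximumPrinciple

variable {n : ℕ} {U : Set (EuclideanSpace ℝ (Fin n))} {w : EuclideanSpace ℝ (Fin n) → ℝ}

theorem mem_frontier_of_isMaxOn_of_lap_pos (hU : IsOpen U)
    (hw : ∀ x ∈ U, ContDiffAt ℝ 2 w x) (hlap : ∀ x ∈ U, 0 < lap w x)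
    {z : EuclideanSpace ℝ (Fin n)} (hz : z ∈ closure U) (hmax : IsMaxOn w (closure U) z) :
    z ∈ frontier U := by
  rw [hU.frontier_eq]
  refine ⟨hz, fun hzU => (hlap z hzU).not_ge ?_⟩
  have hloc : IsLocalMax w z :=
    hmax.isLocalMax (mem_of_superset (hU.mem_nhds hzU) subset_closure)
  exact Finset.sum_nonpos fun i _ => hloc.fderiv_fderiv_apply_nonpos (hw z hzU) _

theorem exists_mem_frontier_isMaxOn_of_lap_nonneg (hn : 0 < n) (hne : U.Nonempty)
    (hU : IsOpen U) (hbd : Bornology.IsBounded U) (hc : ContinuousOn w (closure U))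
    (hw : ∀ x ∈ U, ContDiffAt ℝ 2 w x) (hlap : ∀ x ∈ U, 0 ≤ lap w x) :
    ∃ z ∈ frontier U, IsMaxOn w (closure U) z := by
  have : Nonempty (Fin n) := ⟨⟨0, hn⟩⟩
  have hK : IsCompact (closure U) := hbd.isCompact_closure
  obtain ⟨z₀, hz₀, hmax₀⟩ := (hK.of_isClosed_subset isClosed_frontier frontier_subset_closure
    ).exists_isMaxOn (hbd.nonempty_frontier hne) (hc.mono frontier_subset_closure)
  obtain ⟨C, hC⟩ := isBounded_iff_forall_norm_le.mp hbd.closure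
  refine ⟨z₀, hz₀, fun x hx => show w x ≤ w z₀ from
    le_of_forall_pos_le_add fun η hη => ?_⟩
  set ε := η / (C ^ 2 + 1)
  have hε : 0 < ε := by positivity
  have hq : ∀ y, ContDiffAt ℝ 2 (fun z : EuclideanSpace ℝ (Fin n) => ε * ‖z‖ ^ 2) y :=
    fun _ => contDiffAt_const.mul (contDiff_norm_sq ℝ).contDiffAt
  set wε := w + fun z => ε * ‖z‖ ^ 2
  have hlapε : ∀ y ∈ U, 0 < lap wε y := fun y hy => by
    rw [lap_add (hw y hy) (hq y), lap_const_mul_norm_sq]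
    have hn' : (0 : ℝ) < n := Nat.cast_pos.mpr hn
    linarith [hlap y hy, mul_pos (mul_pos two_pos hn') hε]
  obtain ⟨z, hzK, hzmax⟩ := hK.exists_isMaxOn hne.closure
    (hc.add (continuous_const.mul (continuous_norm.pow 2)).continuousOn)
  have hzF : z ∈ frontier U :=
    mem_frontier_of_isMaxOn_of_lap_pos hU (fun y hy => (hw y hy).add (hq y)) hlapε hzK hzmax
  have hεC : ε * C ^ 2 ≤ η := by
    rw [div_mul_eq_mul_div, div_le_iff₀ (by positivity)]
    nlinarith
  calc w x ≤ wε x := le_add_of_nonneg_right (by positivity)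
    _ ≤ wε z := hzmax hx
    _ ≤ w z₀ + ε * C ^ 2 := by
      have hzC : ‖z‖ ≤ C := hC z hzK
      have hεz : ε * ‖z‖ ^ 2 ≤ ε * C ^ 2 := by gcongr
      exact add_le_add (hmax₀ hzF) hεz
    _ ≤ w z₀ + η := by linarith

end MaximumPrinciple

theorem min_on_boundary_of_supersolution {n : ℕ} (hn : 1 ≤ n)
    (Ω : Set (EuclideanSpace ℝ (Fin n))) (hΩo : IsOpen Ω)
    (b : EuclideanSpace ℝ (Fin n) → ℝ) (hb : ContDiffOn ℝ 2 b Ω)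
    (p₀ : ℝ) (hp₀ : 0 < p₀)
    (hsuper : ∀ x ∈ Ω, 0 ≤ -lap b x + (p₀ / 2) * ‖fderiv ℝ b x‖ ^ 2)
    (Ω' : Set (EuclideanSpace ℝ (Fin n))) (hΩ'ne : Ω'.Nonempty) (hΩ'o : IsOpen Ω')
    (hΩ'bd : Bornology.IsBounded Ω') (hΩ'cl : closure Ω' ⊆ Ω) :
    sInf (b '' closure Ω') = sInf (b '' frontier Ω') := by
  have hΩ' : ∀ x ∈ Ω', x ∈ Ω := fun x hx => hΩ'cl (subset_closure hx)
  have hbC2 : ∀ x ∈ Ω', ContDiffAt ℝ 2 b x := fun x hx =>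
    hb.contDiffAt (hΩo.mem_nhds (hΩ' x hx))
  have hlap : ∀ x ∈ Ω', 0 ≤ lap (fun z => Real.exp (-p₀ * b z)) x := fun x hx => by
    have hsx := hsuper x (hΩ' x hx)
    have hfactor : 0 ≤ -p₀ * lap b x + (-p₀) ^ 2 * ‖fderiv ℝ b x‖ ^ 2 := by
      nlinarith [sq_nonneg ‖fderiv ℝ b x‖]
    rw [lap_exp_const_mul (hbC2 x hx)]
    exact mul_nonneg (Real.exp_nonneg _) hfactor
  obtain ⟨z, hzF, hzmax⟩ := exists_mem_frontier_isMaxOn_of_lap_nonneg hn hΩ'ne hΩ'o hΩ'bd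
    ((hb.continuousOn.mono hΩ'cl).const_mul (-p₀)).rexp
    (fun x hx => (contDiffAt_const.mul (hbC2 x hx)).exp) hlap
  have hzmin : IsMinOn b (closure Ω') z := fun x hx => by simpa [hp₀] using hzmax hx
  exact hzmin.csInf_image_eq_of_subset frontier_subset_closure hzF
end

section
/- Let Ω be a nonempty bounded open subset of ℝⁿ and b : ℝⁿ → ℝ Lipschitz continuous. Suppose Ω' is a potential well of depth b₀ > 0, i.e. Ω' is a nonempty open subset of Ω with min_{cl(Ω')} b < min_{∂Ω'} b and b₀ := min_{∂Ω'} b − min_{cl(Ω')} b. Then for every ω ∈ (0, b₀) there exists a constant C > 0 such that λ₁(p) ≤ C e^{−ωp} for all p ≥ 0. -/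
/-!
On `Ω'` put `u = min 1 (max 0 ((M - b) / δ))` with `M = inf_{∂Ω'} b`, and `u = 0` off `Ω'`.
Since `u` vanishes on `∂Ω'`, it is Lipschitz, and it is an admissible test function.
Its gradient is supported in `{b ≥ M - δ}`, so the weighted Dirichlet energy is
`O(e^{-p(M - δ)})`, while `u = 1` on the nonempty open set `Ω' ∩ {b < m + δ}`,
`m = inf_{cl Ω'} b`, so the weighted mass is at least a multiple of `e^{-p(m + δ)}`.
The Rayleigh quotient is then `O(e^{-p(b₀ - 2δ)})`; take `2δ = b₀ - ω`.
-/

open MeasureTheory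

/-- Variational principal eigenvalue of `-Δ + p∇b·∇` with Dirichlet boundary conditions on `Ω`:
infimum of the weighted Rayleigh quotient `I_{pb}` over nonzero Lipschitz functions vanishing
outside `Ω`. -/
noncomputable def lam1drift {n : ℕ} (Ω : Set (EuclideanSpace ℝ (Fin n)))
    (b : EuclideanSpace ℝ (Fin n) → ℝ) (p : ℝ) : ℝ :=
  sInf { r | ∃ u : EuclideanSpace ℝ (Fin n) → ℝ, (∃ K, LipschitzWith K u) ∧
    (∀ x ∉ Ω, u x = 0) ∧ u ≠ 0 ∧
    r = (∫ x in Ω, Real.exp (-p * b x) * ‖fderiv ℝ u x‖ ^ 2) /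
        (∫ x in Ω, Real.exp (-p * b x) * u x ^ 2) }

open Set Real Topology
open scoped NNReal

theorem IsPreconnected.inter_frontier_nonempty {X : Type*} [TopologicalSpace X] {s t : Set X}
    (hs : IsPreconnected s) (hst : (s ∩ t).Nonempty) (hst' : (s \ t).Nonempty) :
    (s ∩ frontier t).Nonempty := by
  by_contra h
  have hcover : s ⊆ interior t ∪ interior tᶜ := by
    rw [← compl_frontier_eq_union_interior]
    exact fun x hx hxt => h ⟨x, hx, hxt⟩
  rcases hs.subset_or_subset isOpen_interior isOpen_interior
    (disjoint_compl_right.mono interior_subset interior_subset) hcover with hsub | hsub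
  · obtain ⟨x, hxs, hxt⟩ := hst'
    exact hxt (interior_subset (hsub hxs))
  · obtain ⟨x, hxs, hxt⟩ := hst
    exact interior_subset (hsub hxs) hxt

section Indicator

variable {E F : Type*} [NormedAddCommGroup E] [NormedSpace ℝ E] [SeminormedAddCommGroup F]

theorem LipschitzWith.indicator_of_eq_zero_on_frontier {K : ℝ≥0} {f : E → F}
    (hf : LipschitzWith K f) {s : Set E} (hfs : ∀ z ∈ frontier s, f z = 0) : LipschitzWith K (s.indicator f) := by
  have hcross : ∀ x ∈ s, ∀ y ∉ s, dist (s.indicator f x) (s.indicator f y) ≤ K * dist x y := by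
    intro x hx y hy
    obtain ⟨z, hz, hzs⟩ := (convex_segment x y).isPreconnected.inter_frontier_nonempty
      ⟨x, left_mem_segment ℝ x y, hx⟩ ⟨y, right_mem_segment ℝ x y, hy⟩
    calc dist (s.indicator f x) (s.indicator f y) = dist (f x) (f z) := by
          rw [indicator_of_mem hx, indicator_of_notMem hy, hfs z hzs]
      _ ≤ K * dist x z := hf.dist_le_mul x z
      _ ≤ K * dist x y := by
          gcongr
          linarith [dist_add_dist_of_mem_segment hz, dist_nonneg (x := z) (y := y)]
  refine LipschitzWith.of_dist_le_mul fun x y => ?_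
  by_cases hx : x ∈ s <;> by_cases hy : y ∈ s
  · simpa only [indicator_of_mem hx, indicator_of_mem hy] using hf.dist_le_mul x y
  · exact hcross x hx y hy
  · rw [dist_comm, dist_comm x]
    exact hcross y hy x hx
  · simp only [indicator_of_notMem hx, indicator_of_notMem hy, dist_self]
    positivity

end Indicator

section Cutoff

theorem lipschitzWith_min_one_max_zero_div (M : ℝ) (δ : ℝ≥0) :
    LipschitzWith δ⁻¹ fun t : ℝ => min 1 (max 0 ((M - t) / δ)) := by
  refine LipschitzWith.const_min (LipschitzWith.const_max ?_ 0) 1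
  refine LipschitzWith.of_dist_le_mul fun s t => ?_
  rw [Real.dist_eq, Real.dist_eq, ← sub_div, abs_div, NNReal.abs_eq, NNReal.coe_inv,
    div_eq_inv_mul, sub_sub_sub_cancel_left, abs_sub_comm]

noncomputable def wellCutoff {E : Type*} (Ω' : Set E) (b : E → ℝ) (M : ℝ) (δ : ℝ≥0) : E → ℝ :=
  Ω'.indicator fun x => min 1 (max 0 ((M - b x) / δ))

variable {E : Type*} {Ω' : Set E} {b : E → ℝ} {M : ℝ} {δ : ℝ≥0}

theorem wellCutoff_of_notMem {x : E} (hx : x ∉ Ω') : wellCutoff Ω' b M δ x = 0 :=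
  indicator_of_notMem hx _

theorem wellCutoff_of_le {x : E} (hδ : 0 < δ) (hx : x ∈ Ω') (hbx : b x ≤ M - δ) :
    wellCutoff Ω' b M δ x = 1 := by
  have : 1 ≤ (M - b x) / δ := by rw [le_div_iff₀ (by exact_mod_cast hδ)]; linarith
  simp [wellCutoff, indicator_of_mem hx, max_eq_right (zero_le_one.trans this), this]

variable [NormedAddCommGroup E] [NormedSpace ℝ E]

theorem lipschitzWith_wellCutoff {K : ℝ≥0} (hb : LipschitzWith K b)
    (hM : ∀ z ∈ frontier Ω', M ≤ b z) : LipschitzWith (δ⁻¹ * K) (wellCutoff Ω' b M δ) := by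
  refine ((lipschitzWith_min_one_max_zero_div M δ).comp hb).indicator_of_eq_zero_on_frontier
    fun z hz => ?_
  have : (M - b z) / δ ≤ 0 := div_nonpos_of_nonpos_of_nonneg (by linarith [hM z hz]) δ.2
  simp [Function.comp, max_eq_left this]

theorem le_of_fderiv_wellCutoff_ne_zero (hb : Continuous b) (hδ : 0 < δ)
    (hM : ∀ z ∈ frontier Ω', M ≤ b z) {x : E} (hx : fderiv ℝ (wellCutoff Ω' b M δ) x ≠ 0) :
    M - δ ≤ b x := by
  by_contra! hlt
  have hxf : x ∉ frontier Ω' := fun hxf => by linarith [hM x hxf, δ.2]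
  rw [← mem_compl_iff, compl_frontier_eq_union_interior] at hxf
  apply hx
  rcases hxf with hxi | hxe
  · have hone : wellCutoff Ω' b M δ =ᶠ[𝓝 x] fun _ => 1 := by
      filter_upwards [isOpen_interior.mem_nhds hxi, (isOpen_lt hb continuous_const).mem_nhds hlt]
        with y hyi hyb
      exact wellCutoff_of_le hδ (interior_subset hyi) hyb.le
    rw [hone.fderiv_eq, fderiv_const_apply]
  · have hzero : wellCutoff Ω' b M δ =ᶠ[𝓝 x] fun _ => 0 := by
      filter_upwards [isOpen_interior.mem_nhds hxe] with y hy
      exact wellCutoff_of_notMem (interior_subset hy)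
    rw [hzero.fderiv_eq, fderiv_const_apply]

end Cutoff

section WeightedIntegrals

variable {E : Type*} [MeasurableSpace E] {μ : Measure E} {Ω : Set E} {b u : E → ℝ} {p : ℝ}

theorem exp_mul_measureReal_le_setIntegral_exp_mul_sq
    (hint : IntegrableOn (fun x => exp (-p * b x) * u x ^ 2) Ω μ) {W : Set E}
    (hW : MeasurableSet W) (hWfin : μ W ≠ ⊤) (hWΩ : W ⊆ Ω) (hu1 : ∀ x ∈ W, u x = 1) {α : ℝ}
    (hα : ∀ x ∈ W, b x ≤ α) (hp : 0 ≤ p) :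
    exp (-p * α) * μ.real W ≤ ∫ x in Ω, exp (-p * b x) * u x ^ 2 ∂μ :=
  calc exp (-p * α) * μ.real W = ∫ _ in W, exp (-p * α) ∂μ := by
        rw [setIntegral_const, smul_eq_mul, mul_comm]
    _ ≤ ∫ x in W, exp (-p * b x) * u x ^ 2 ∂μ := by
        refine setIntegral_mono_on (integrableOn_const hWfin) (hint.mono_set hWΩ) hW
          fun x hx => ?_
        rw [hu1 x hx, one_pow, mul_one]
        exact exp_le_exp.2 (by nlinarith [hα x hx])
    _ ≤ ∫ x in Ω, exp (-p * b x) * u x ^ 2 ∂μ :=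
        setIntegral_mono_set hint (ae_of_all _ fun x => by positivity) hWΩ.eventuallyLE

variable [NormedAddCommGroup E] [NormedSpace ℝ E]

theorem setIntegral_exp_mul_norm_fderiv_sq_le (hΩ : μ Ω < ⊤) {L : ℝ≥0} (hu : LipschitzWith L u)
    {β : ℝ} (hβ : ∀ x, fderiv ℝ u x ≠ 0 → β ≤ b x) (hp : 0 ≤ p) :
    ∫ x in Ω, exp (-p * b x) * ‖fderiv ℝ u x‖ ^ 2 ∂μ ≤ exp (-p * β) * L ^ 2 * μ.real Ω := by
  have hbound : ∀ x ∈ Ω, ‖exp (-p * b x) * ‖fderiv ℝ u x‖ ^ 2‖ ≤ exp (-p * β) * L ^ 2 := by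
    intro x _
    rw [Real.norm_of_nonneg (by positivity)]
    by_cases hx : fderiv ℝ u x = 0
    · simp only [hx, norm_zero, sq, mul_zero]
      positivity
    have hexp : exp (-p * b x) ≤ exp (-p * β) := exp_le_exp.2 (by nlinarith [hβ x hx])
    have hgrad : ‖fderiv ℝ u x‖ ^ 2 ≤ (L : ℝ) ^ 2 := by
      gcongr
      exact norm_fderiv_le_of_lipschitz ℝ hu
    exact mul_le_mul hexp hgrad (by positivity) (exp_pos _).le
  exact (le_abs_self _).trans (norm_setIntegral_le_of_norm_le_const hΩ hbound)

end WeightedIntegrals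

section Eigenvalue

variable {n : ℕ} {Ω : Set (EuclideanSpace ℝ (Fin n))} {b u : EuclideanSpace ℝ (Fin n) → ℝ}
  {p : ℝ}

theorem lam1drift_le_rayleigh (hu : ∃ L, LipschitzWith L u) (hu0 : ∀ x ∉ Ω, u x = 0)
    (hu_ne : u ≠ 0) :
    lam1drift Ω b p ≤ (∫ x in Ω, exp (-p * b x) * ‖fderiv ℝ u x‖ ^ 2) /
      (∫ x in Ω, exp (-p * b x) * u x ^ 2) := by
  refine csInf_le ⟨0, ?_⟩ ⟨u, hu, hu0, hu_ne, rfl⟩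
  rintro _ ⟨v, -, -, -, rfl⟩
  exact div_nonneg (integral_nonneg fun x => by positivity) (integral_nonneg fun x => by positivity)

theorem lam1drift_le_of_plateau (hΩ : Bornology.IsBounded Ω) (hb : Continuous b) {L : ℝ≥0}
    (hu : LipschitzWith L u) (hu0 : ∀ x ∉ Ω, u x = 0) {W : Set (EuclideanSpace ℝ (Fin n))}
    (hWo : IsOpen W) (hWne : W.Nonempty) (hWΩ : W ⊆ Ω) (hu1 : ∀ x ∈ W, u x = 1) {α β : ℝ}
    (hα : ∀ x ∈ W, b x ≤ α) (hβ : ∀ x, fderiv ℝ u x ≠ 0 → β ≤ b x) (hp : 0 ≤ p) :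
    lam1drift Ω b p ≤ L ^ 2 * volume.real Ω / volume.real W * exp (-(β - α) * p) := by
  have hu_ne : u ≠ 0 := fun h => by
    obtain ⟨x, hx⟩ := hWne
    simpa [h] using hu1 x hx
  have hW : 0 < volume.real W :=
    ENNReal.toReal_pos (hWo.measure_pos volume hWne).ne' (hΩ.subset hWΩ).measure_lt_top.ne
  have hcont : Continuous fun x => exp (-p * b x) * u x ^ 2 := by
    have := hu.continuous
    fun_prop
  have hint : IntegrableOn (fun x => exp (-p * b x) * u x ^ 2) Ω :=
    (hcont.continuousOn.integrableOn_compact hΩ.isCompact_closure).mono_set subset_closure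
  have hden := exp_mul_measureReal_le_setIntegral_exp_mul_sq hint hWo.measurableSet
    (hΩ.subset hWΩ).measure_lt_top.ne hWΩ hu1 hα hp
  calc lam1drift Ω b p
      ≤ (∫ x in Ω, exp (-p * b x) * ‖fderiv ℝ u x‖ ^ 2) /
          (∫ x in Ω, exp (-p * b x) * u x ^ 2) := lam1drift_le_rayleigh ⟨L, hu⟩ hu0 hu_ne
    _ ≤ exp (-p * β) * L ^ 2 * volume.real Ω / (exp (-p * α) * volume.real W) :=
        div_le_div₀ (by positivity)
          (setIntegral_exp_mul_norm_fderiv_sq_le hΩ.measure_lt_top hu hβ hp) (by positivity) hden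
    _ = L ^ 2 * volume.real Ω / volume.real W * exp (-(β - α) * p) := by
        rw [show -(β - α) * p = -p * β - -p * α by ring, exp_sub]
        field_simp

end Eigenvalue

theorem Continuous.inter_preimage_Iio_nonempty_of_sInf_image_closure_lt {X : Type*}
    [TopologicalSpace X] {f : X → ℝ} (hf : Continuous f) {s : Set X} (hs : s.Nonempty) {c : ℝ}
    (hc : sInf (f '' closure s) < c) : (s ∩ f ⁻¹' Iio c).Nonempty := by
  obtain ⟨_, ⟨x, hx, rfl⟩, hxc⟩ := exists_lt_of_csInf_lt (hs.closure.image f) hc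
  obtain ⟨y, hyc, hys⟩ := mem_closure_iff.1 hx _ (isOpen_Iio.preimage hf) hxc
  exact ⟨y, hys, hyc⟩

theorem exponential_decay_of_potential_well_general {n : ℕ}
    (Ω : Set (EuclideanSpace ℝ (Fin n)))
    (hΩbd : Bornology.IsBounded Ω)
    (b : EuclideanSpace ℝ (Fin n) → ℝ) (K : NNReal) (hb : LipschitzWith K b)
    (Ω' : Set (EuclideanSpace ℝ (Fin n))) (hΩ'ne : Ω'.Nonempty) (hΩ'o : IsOpen Ω')
    (hΩ'sub : Ω' ⊆ Ω)
    (b₀ : ℝ) (hb₀ : b₀ = sInf (b '' frontier Ω') - sInf (b '' closure Ω'))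
    (ω : ℝ) (hω : ω ∈ Set.Ioo 0 b₀) :
    ∃ C > 0, ∀ p : ℝ, 0 ≤ p → lam1drift Ω b p ≤ C * Real.exp (-ω * p) := by
  set m := sInf (b '' closure Ω')
  set M := sInf (b '' frontier Ω')
  set δ := Real.toNNReal ((b₀ - ω) / 2)
  have hδ : (δ : ℝ) = (b₀ - ω) / 2 := Real.coe_toNNReal _ (by linarith [hω.2])
  have hδ0 : 0 < δ := by simpa [δ] using hω.2
  have hM : ∀ z ∈ frontier Ω', M ≤ b z := fun z hz =>
    csInf_le ((((hΩbd.subset hΩ'sub).isCompact_closure.of_isClosed_subset isClosed_frontier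
      frontier_subset_closure).image hb.continuous).bddBelow) (mem_image_of_mem b hz)
  set W := Ω' ∩ b ⁻¹' Iio (m + δ)
  have hWne : W.Nonempty :=
    hb.continuous.inter_preimage_Iio_nonempty_of_sInf_image_closure_lt hΩ'ne
      (lt_add_of_pos_right m (by exact_mod_cast hδ0))
  have hW1 : ∀ x ∈ W, wellCutoff Ω' b M δ x = 1 := fun x hx =>
    wellCutoff_of_le hδ0 hx.1 (by linarith [show b x < m + δ from hx.2, hω.1])
  set C := ((δ⁻¹ * K : ℝ≥0) : ℝ) ^ 2 * volume.real Ω / volume.real W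
  refine ⟨max C 1, by positivity, fun p hp => ?_⟩
  have hdecay := lam1drift_le_of_plateau hΩbd hb.continuous (lipschitzWith_wellCutoff hb hM)
    (fun x hx => wellCutoff_of_notMem fun hx' => hx (hΩ'sub hx'))
    (hΩ'o.inter (isOpen_Iio.preimage hb.continuous)) hWne (inter_subset_left.trans hΩ'sub) hW1
    (fun x hx => hx.2.le) (fun x => le_of_fderiv_wellCutoff_ne_zero hb.continuous hδ0 hM) hp
  rw [show M - δ - (m + δ) = ω by linarith] at hdecay
  exact hdecay.trans (by gcongr; exact le_max_left _ _)

theorem exponential_decay_of_potential_well {n : ℕ} (hn : 1 ≤ n)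
    (Ω : Set (EuclideanSpace ℝ (Fin n)))
    (hΩne : Ω.Nonempty) (hΩo : IsOpen Ω) (hΩbd : Bornology.IsBounded Ω)
    (b : EuclideanSpace ℝ (Fin n) → ℝ) (K : NNReal) (hb : LipschitzWith K b)
    (Ω' : Set (EuclideanSpace ℝ (Fin n))) (hΩ'ne : Ω'.Nonempty) (hΩ'o : IsOpen Ω')
    (hΩ'sub : Ω' ⊆ Ω)
    (hwell : sInf (b '' closure Ω') < sInf (b '' frontier Ω'))
    (b₀ : ℝ) (hb₀ : b₀ = sInf (b '' frontier Ω') - sInf (b '' closure Ω'))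
    (ω : ℝ) (hω : ω ∈ Set.Ioo 0 b₀) :
    ∃ C > 0, ∀ p : ℝ, 0 ≤ p → lam1drift Ω b p ≤ C * Real.exp (-ω * p) :=
  exponential_decay_of_potential_well_general Ω hΩbd b K hb Ω' hΩ'ne hΩ'o hΩ'sub b₀ hb₀ ω hω
end

section
/- Let l > 0 and let b : [−l, l] → ℝ be Lipschitz continuous and even. Set b₁ := min_{[0,l]} b, b₂ := max_{[0,l]} b, B₁ := {x ∈ [0,l] : b(x) = b₁}, B₂ := {x ∈ [0,l] : b(x) = b₂}, and assume max B₁ < min B₂. Then λ₁(p) · (∫₀ˡ e^{−p b(x)} dx) · (∫₀ˡ e^{p b(y)} dy) → 1 as p → ∞; that is, λ₁(p) is asymptotically equivalent to (∫₀ˡ e^{−pb} dx)⁻¹ (∫₀ˡ e^{pb} dy)⁻¹. -/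
/-!
Write `ρ = exp (-p b)`, `A = ∫₀ˡ ρ` and `B = ∫₀ˡ ρ⁻¹`. An admissible `u` vanishes at one end of
each of `[-l, 0]` and `[0, l]`, so the fundamental theorem of calculus and the weighted
Cauchy–Schwarz inequality give `u(x)² ≤ (∫ ρ u'²)(∫ ρ⁻¹)` on each half; integrating against `ρ`
and using evenness yields `λ₁(p) ≥ (A B)⁻¹`. Conversely, the test function equal to `∫_{|x|}^l ρ⁻¹`
for `c ≤ |x| ≤ l` and constant on `[-c, c]` has Rayleigh quotient at most
`((∫₀ᶜ ρ) (∫_cˡ ρ⁻¹))⁻¹`. Taking `c` strictly between `max B₁` and `min B₂`, the minimum of `b` is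
attained in `[0, c]` and `b` stays strictly larger on `[c, l]`, and symmetrically for the maximum;
by Laplace's principle `∫₀ᶜ ρ ~ A` and `∫_cˡ ρ⁻¹ ~ B`, so the two bounds meet.
-/

open MeasureTheory intervalIntegral

/-- The variational principal eigenvalue `λ₁(p)` of the one-dimensional drift operator
`-u'' + p b' u'` on `(-l, l)` with Dirichlet boundary conditions: the infimum of the
weighted Rayleigh quotient over nonzero Lipschitz functions vanishing at `±l`. -/
noncomputable def lam1d (l : ℝ) (b : ℝ → ℝ) (p : ℝ) : ℝ :=
  sInf { r | ∃ u : ℝ → ℝ, (∃ K, LipschitzWith K u) ∧ u (-l) = 0 ∧ u l = 0 ∧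
    (∃ x ∈ Set.Icc (-l) l, u x ≠ 0) ∧
    r = (∫ x in (-l)..l, Real.exp (-p * b x) * deriv u x ^ 2) /
        (∫ x in (-l)..l, Real.exp (-p * b x) * u x ^ 2) }

open Filter Set Topology Real

theorem sq_integral_le_integral_mul_sq_mul_integral_inv {α : Type*} [MeasurableSpace α]
    {μ : Measure α} {f w : α → ℝ} (hw : ∀ x, 0 < w x) (hf : Integrable f μ)
    (hwf : Integrable (fun x => w x * f x ^ 2) μ) (hwi : Integrable (fun x => (w x)⁻¹) μ) :
    (∫ x, f x ∂μ) ^ 2 ≤ (∫ x, w x * f x ^ 2 ∂μ) * ∫ x, (w x)⁻¹ ∂μ := by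
  -- `t ↦ ∫ w⁻¹ (t w f + 1)²` is a nonnegative quadratic polynomial
  have hquad : ∀ t : ℝ, 0 ≤ (∫ x, w x * f x ^ 2 ∂μ) * (t * t) + 2 * (∫ x, f x ∂μ) * t +
      ∫ x, (w x)⁻¹ ∂μ := by
    intro t
    have hexpand : ∀ x, (w x)⁻¹ * (t * w x * f x + 1) ^ 2 =
        t * t * (w x * f x ^ 2) + 2 * t * f x + (w x)⁻¹ := fun x => by
      field_simp [(hw x).ne']; ring
    calc 0 ≤ ∫ x, (w x)⁻¹ * (t * w x * f x + 1) ^ 2 ∂μ :=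
          integral_nonneg fun x => mul_nonneg (inv_nonneg.2 (hw x).le) (sq_nonneg _)
      _ = _ := by
        simp_rw [hexpand]
        rw [integral_add (by exact (hwf.const_mul (t * t)).add (hf.const_mul (2 * t))) hwi,
          integral_add (hwf.const_mul _) (hf.const_mul _), MeasureTheory.integral_const_mul,
          MeasureTheory.integral_const_mul]
        ring
  have := discrim_le_zero hquad
  rw [discrim] at this
  nlinarith

theorem LipschitzWith.intervalIntegrable_deriv_sq {u : ℝ → ℝ} {K : NNReal}
    (hu : LipschitzWith K u) (a b : ℝ) :
    IntervalIntegrable (fun x => deriv u x ^ 2) volume a b :=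
  (intervalIntegrable_const (c := (K : ℝ) ^ 2)).mono_fun
    ((measurable_deriv u).pow_const 2).aestronglyMeasurable
    (Eventually.of_forall fun x => by
      simpa [abs_of_nonneg (sq_nonneg (K : ℝ))] using
        pow_le_pow_left₀ (norm_nonneg _) (norm_deriv_le_of_lipschitz (x₀ := x) hu) 2)

theorem LipschitzWith.sq_sub_le_integral_mul_integral_inv {u w : ℝ → ℝ} {K : NNReal}
    (hu : LipschitzWith K u) (hw : Continuous w) (hw0 : ∀ x, 0 < w x) {x y : ℝ}
    (hxy : x ≤ y) :
    (u y - u x) ^ 2 ≤ (∫ t in x..y, w t * deriv u t ^ 2) * ∫ t in x..y, (w t)⁻¹ := by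
  have hac := (hu.lipschitzOnWith (s := uIcc x y)).absolutelyContinuousOnInterval
  rw [← hac.integral_deriv_eq_sub, integral_of_le hxy, integral_of_le hxy, integral_of_le hxy]
  exact sq_integral_le_integral_mul_sq_mul_integral_inv hw0 hac.intervalIntegrable_deriv.1
    ((hu.intervalIntegrable_deriv_sq x y).continuousOn_mul hw.continuousOn).1
    ((hw.inv₀ fun t => (hw0 t).ne').intervalIntegrable x y).1

theorem LipschitzWith.sq_le_of_eq_zero_or_eq_zero {u w : ℝ → ℝ} {K : NNReal}
    (hu : LipschitzWith K u) (hw : Continuous w) (hw0 : ∀ x, 0 < w x) {a b x : ℝ}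
    (hx : x ∈ Icc a b) (h0 : u a = 0 ∨ u b = 0) :
    u x ^ 2 ≤ (∫ t in a..b, w t * deriv u t ^ 2) * ∫ t in a..b, (w t)⁻¹ := by
  have hwd : ∀ s t, IntervalIntegrable (fun t => w t * deriv u t ^ 2) volume s t := fun s t =>
    (hu.intervalIntegrable_deriv_sq s t).continuousOn_mul hw.continuousOn
  have hwi : ∀ s t, IntervalIntegrable (fun t => (w t)⁻¹) volume s t :=
    (hw.inv₀ fun t => (hw0 t).ne').intervalIntegrable
  have hwd0 : ∀ t, 0 ≤ w t * deriv u t ^ 2 := fun t => mul_nonneg (hw0 t).le (sq_nonneg _)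
  have hwi0 : ∀ t, 0 ≤ (w t)⁻¹ := fun t => inv_nonneg.2 (hw0 t).le
  have hmono : ∀ s t, a ≤ s → s ≤ t → t ≤ b →
      (∫ r in s..t, w r * deriv u r ^ 2) * (∫ r in s..t, (w r)⁻¹) ≤
        (∫ r in a..b, w r * deriv u r ^ 2) * ∫ r in a..b, (w r)⁻¹ := fun s t has hst htb =>
    mul_le_mul
      (integral_mono_interval has hst htb (.of_forall hwd0) (hwd a b))
      (integral_mono_interval has hst htb (.of_forall hwi0) (hwi a b))
      (integral_nonneg hst fun r _ => hwi0 r)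
      (integral_nonneg (has.trans (hst.trans htb)) fun r _ => hwd0 r)
  rcases h0 with ha | hb
  · calc u x ^ 2 = (u x - u a) ^ 2 := by rw [ha, sub_zero]
      _ ≤ _ := hu.sq_sub_le_integral_mul_integral_inv hw hw0 hx.1
      _ ≤ _ := hmono a x le_rfl hx.1 hx.2
  · calc u x ^ 2 = (u b - u x) ^ 2 := by rw [hb, zero_sub, neg_sq]
      _ ≤ _ := hu.sq_sub_le_integral_mul_integral_inv hw hw0 hx.2
      _ ≤ _ := hmono x b hx.1 hx.2 le_rfl

theorem LipschitzWith.integral_mul_sq_le_of_eq_zero_or_eq_zero {u w : ℝ → ℝ} {K : NNReal}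
    (hu : LipschitzWith K u) (hw : Continuous w) (hw0 : ∀ x, 0 < w x) {a b : ℝ}
    (hab : a ≤ b) (h0 : u a = 0 ∨ u b = 0) :
    ∫ x in a..b, w x * u x ^ 2 ≤
      (∫ x in a..b, w x) * (∫ t in a..b, (w t)⁻¹) * ∫ t in a..b, w t * deriv u t ^ 2 := by
  rw [mul_assoc, ← intervalIntegral.integral_mul_const, mul_comm (∫ t in a..b, (w t)⁻¹)]
  refine integral_mono_on hab ((hw.mul (hu.continuous.pow 2)).intervalIntegrable a b)
    ((hw.intervalIntegrable a b).mul_const _) fun x hx => ?_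
  exact mul_le_mul_of_nonneg_left (hu.sq_le_of_eq_zero_or_eq_zero hw hw0 hx h0) (hw0 x).le

theorem integral_neg_zero_eq_integral_zero_of_even {f : ℝ → ℝ} {l : ℝ} (hl : 0 ≤ l)
    (hf : ∀ x ∈ Icc (-l) l, f (-x) = f x) :
    ∫ x in (-l)..0, f x = ∫ x in 0..l, f x := by
  rw [← neg_zero, ← integral_comp_neg, neg_zero]
  refine integral_congr fun x hx => hf x ?_
  rw [uIcc_of_le hl] at hx
  exact ⟨by linarith [hx.1], hx.2⟩

theorem integral_neg_eq_two_mul_integral_zero_of_even {f : ℝ → ℝ} {l : ℝ} (hl : 0 ≤ l)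
    (hf : ∀ x ∈ Icc (-l) l, f (-x) = f x) (hfi : IntervalIntegrable f volume (-l) l) :
    ∫ x in (-l)..l, f x = 2 * ∫ x in 0..l, f x := by
  rw [← integral_add_adjacent_intervals (hfi.mono_set ?_) (hfi.mono_set ?_),
    integral_neg_zero_eq_integral_zero_of_even hl hf, two_mul]
  all_goals
    rw [uIcc_of_le (by linarith), uIcc_of_le (by linarith)]
    exact Icc_subset_Icc (by linarith) (by linarith)

noncomputable def rayleighQuotient (l : ℝ) (w u : ℝ → ℝ) : ℝ :=
  (∫ x in (-l)..l, w x * deriv u x ^ 2) / ∫ x in (-l)..l, w x * u x ^ 2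

theorem rayleighQuotient_nonneg {l : ℝ} (hl : 0 ≤ l) {w : ℝ → ℝ} (hw0 : ∀ x, 0 < w x)
    (u : ℝ → ℝ) : 0 ≤ rayleighQuotient l w u :=
  div_nonneg (integral_nonneg (by linarith) fun x _ => mul_nonneg (hw0 x).le (sq_nonneg _))
    (integral_nonneg (by linarith) fun x _ => mul_nonneg (hw0 x).le (sq_nonneg _))

theorem inv_integral_mul_integral_inv_le_rayleighQuotient {l : ℝ} (hl : 0 < l)
    {w u : ℝ → ℝ} {K : NNReal} (hw : Continuous w) (hw0 : ∀ x, 0 < w x)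
    (hweven : ∀ x ∈ Icc (-l) l, w (-x) = w x) (hu : LipschitzWith K u) (hul : u (-l) = 0)
    (hur : u l = 0) (hne : ∃ x ∈ Icc (-l) l, u x ≠ 0) :
    ((∫ x in 0..l, w x) * ∫ x in 0..l, (w x)⁻¹)⁻¹ ≤ rayleighQuotient l w u := by
  have hwi : Continuous fun x => (w x)⁻¹ := hw.inv₀ fun x => (hw0 x).ne'
  have hAB : 0 < (∫ x in 0..l, w x) * ∫ x in 0..l, (w x)⁻¹ :=
    mul_pos (intervalIntegral_pos_of_pos (hw.intervalIntegrable _ _) hw0 hl)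
      (intervalIntegral_pos_of_pos (hwi.intervalIntegrable _ _) (fun x => inv_pos.2 (hw0 x)) hl)
  have hD : 0 < ∫ x in (-l)..l, w x * u x ^ 2 := by
    obtain ⟨x, hx, hux⟩ := hne
    exact integral_pos (by linarith) (hw.mul (hu.continuous.pow 2)).continuousOn
      (fun y _ => mul_nonneg (hw0 y).le (sq_nonneg _)) ⟨x, hx, by have := hw0 x; positivity⟩
  have hleft := hu.integral_mul_sq_le_of_eq_zero_or_eq_zero hw hw0 (neg_nonpos.2 hl.le)
    (Or.inl hul)
  rw [integral_neg_zero_eq_integral_zero_of_even hl.le hweven,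
    integral_neg_zero_eq_integral_zero_of_even (f := fun x => (w x)⁻¹) hl.le
      fun x hx => by rw [hweven x hx]] at hleft
  have hright := hu.integral_mul_sq_le_of_eq_zero_or_eq_zero hw hw0 hl.le (Or.inr hur)
  have hsplit : ∀ g : ℝ → ℝ, (∀ a b, IntervalIntegrable g volume a b) →
      ∫ x in (-l)..l, g x = (∫ x in (-l)..0, g x) + ∫ x in 0..l, g x := fun g hg =>
    (integral_add_adjacent_intervals (hg _ _) (hg _ _)).symm
  rw [rayleighQuotient, le_div_iff₀ hD, inv_mul_le_iff₀ hAB,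
    hsplit (fun x => w x * u x ^ 2) (hw.mul (hu.continuous.pow 2)).intervalIntegrable,
    hsplit (fun x => w x * deriv u x ^ 2) fun a b =>
      (hu.intervalIntegrable_deriv_sq a b).continuousOn_mul hw.continuousOn]
  linarith

noncomputable def plateauTestFunction (W : ℝ → ℝ) (c l x : ℝ) : ℝ :=
  ∫ t in max c (min |x| l)..l, W t

section plateauTestFunction

variable {W : ℝ → ℝ} {c l x : ℝ}

theorem plateauTestFunction_of_abs_le (hcl : c ≤ l) (hx : |x| ≤ c) :
    plateauTestFunction W c l x = ∫ t in c..l, W t := by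
  rw [plateauTestFunction, min_eq_left (hx.trans hcl), max_eq_left hx]

theorem plateauTestFunction_of_mem_Icc (hc : 0 ≤ c) (hx : x ∈ Icc c l) :
    plateauTestFunction W c l x = ∫ t in x..l, W t := by
  rw [plateauTestFunction, abs_of_nonneg (hc.trans hx.1), min_eq_left hx.2, max_eq_right hx.1]

@[simp]
theorem plateauTestFunction_neg : plateauTestFunction W c l (-x) = plateauTestFunction W c l x := by
  simp only [plateauTestFunction, abs_neg]

theorem plateauTestFunction_self (hc : 0 ≤ c) (hcl : c ≤ l) : plateauTestFunction W c l l = 0 := by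
  rw [plateauTestFunction_of_mem_Icc hc ⟨hcl, le_rfl⟩, integral_same]

theorem exists_lipschitzWith_plateauTestFunction (hW : Continuous W) (hcl : c ≤ l) :
    ∃ K, LipschitzWith K (plateauTestFunction W c l) := by
  have hderiv : ∀ y, HasDerivAt (fun y => ∫ t in y..l, W t) (-W y) y := fun y =>
    integral_hasDerivAt_left (hW.intervalIntegrable _ _) (hW.stronglyMeasurableAtFilter _ _)
      hW.continuousAt
  have hC1 : ContDiff ℝ 1 fun y => ∫ t in y..l, W t := by
    refine contDiff_one_iff_deriv.2 ⟨fun y => (hderiv y).differentiableAt, ?_⟩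
    rw [show deriv (fun y => ∫ t in y..l, W t) = -W from funext fun y => (hderiv y).deriv]
    exact hW.neg
  obtain ⟨K, hK⟩ := hC1.contDiffOn.exists_lipschitzOnWith one_ne_zero (convex_Icc c l)
    isCompact_Icc
  have hclamp : LipschitzWith 1 fun x : ℝ => max c (min |x| l) :=
    (lipschitzWith_one_norm.min_const l).const_max c
  refine ⟨K * 1, lipschitzOnWith_univ.1 ?_⟩
  exact hK.comp hclamp.lipschitzOnWith fun x _ => ⟨le_max_left _ _, max_le hcl (min_le_right _ _)⟩

theorem hasDerivAt_plateauTestFunction_of_mem_Ioo (hW : Continuous W) (hc : 0 ≤ c)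
    (hx : x ∈ Ioo c l) : HasDerivAt (plateauTestFunction W c l) (-W x) x := by
  refine (integral_hasDerivAt_left (b := l) (hW.intervalIntegrable _ _)
    (hW.stronglyMeasurableAtFilter _ _) hW.continuousAt).congr_of_eventuallyEq ?_
  filter_upwards [Ioo_mem_nhds hx.1 hx.2] with y hy
  exact plateauTestFunction_of_mem_Icc hc (Ioo_subset_Icc_self hy)

theorem hasDerivAt_plateauTestFunction_of_abs_lt (hcl : c ≤ l) (hx : |x| < c) :
    HasDerivAt (plateauTestFunction W c l) 0 x := by
  refine (hasDerivAt_const x (∫ t in c..l, W t)).congr_of_eventuallyEq ?_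
  filter_upwards [(isOpen_lt continuous_abs continuous_const).mem_nhds hx] with y hy
  exact plateauTestFunction_of_abs_le hcl (le_of_lt hy)

theorem deriv_plateauTestFunction_neg :
    deriv (plateauTestFunction W c l) (-x) = -deriv (plateauTestFunction W c l) x := by
  have h := deriv_comp_neg (f := plateauTestFunction W c l) (x := x)
  simp only [plateauTestFunction_neg] at h
  linarith

end plateauTestFunction

section plateauRayleigh

variable {l c : ℝ} {w : ℝ → ℝ}

theorem integral_mul_deriv_plateauTestFunction_sq (hc : 0 ≤ c) (hcl : c ≤ l)
    (hw : Continuous w) (hw0 : ∀ x, 0 < w x) (hweven : ∀ x ∈ Icc (-l) l, w (-x) = w x) :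
    ∫ x in (-l)..l, w x * deriv (plateauTestFunction (fun x => (w x)⁻¹) c l) x ^ 2 =
      2 * ∫ x in c..l, (w x)⁻¹ := by
  have hW : Continuous fun x => (w x)⁻¹ := hw.inv₀ fun x => (hw0 x).ne'
  obtain ⟨K, hK⟩ := exists_lipschitzWith_plateauTestFunction (c := c) (l := l) hW hcl
  have hint : ∀ a b, IntervalIntegrable
      (fun x => w x * deriv (plateauTestFunction (fun x => (w x)⁻¹) c l) x ^ 2) volume a b :=
    fun a b => (hK.intervalIntegrable_deriv_sq a b).continuousOn_mul hw.continuousOn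
  rw [integral_neg_eq_two_mul_integral_zero_of_even (hc.trans hcl)
      (fun x hx => by rw [hweven x hx, deriv_plateauTestFunction_neg, neg_sq]) (hint _ _),
    ← integral_add_adjacent_intervals (hint 0 c) (hint c l),
    integral_congr_Ioo_of_le hc (g := fun _ => 0) fun x hx => by
      rw [(hasDerivAt_plateauTestFunction_of_abs_lt hcl
        (abs_lt.2 ⟨by linarith [hx.1], hx.2⟩)).deriv]
      ring,
    integral_congr_Ioo_of_le hcl (g := fun x => (w x)⁻¹) fun x hx => by
      rw [(hasDerivAt_plateauTestFunction_of_mem_Ioo hW hc hx).deriv, neg_sq]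
      field_simp [(hw0 x).ne'],
    intervalIntegral.integral_zero, zero_add]

theorem two_mul_integral_mul_sq_le_integral_mul_plateauTestFunction_sq (hc : 0 ≤ c)
    (hcl : c ≤ l) (hw : Continuous w) (hw0 : ∀ x, 0 < w x)
    (hweven : ∀ x ∈ Icc (-l) l, w (-x) = w x) :
    2 * ((∫ x in 0..c, w x) * (∫ x in c..l, (w x)⁻¹) ^ 2) ≤
      ∫ x in (-l)..l, w x * plateauTestFunction (fun x => (w x)⁻¹) c l x ^ 2 := by
  obtain ⟨K, hK⟩ := exists_lipschitzWith_plateauTestFunction (c := c) (l := l)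
    (hw.inv₀ fun x => (hw0 x).ne') hcl
  have hcont : Continuous fun x => w x * plateauTestFunction (fun x => (w x)⁻¹) c l x ^ 2 :=
    hw.mul (hK.continuous.pow 2)
  rw [integral_neg_eq_two_mul_integral_zero_of_even (hc.trans hcl)
    (fun x hx => by rw [hweven x hx, plateauTestFunction_neg]) (hcont.intervalIntegrable _ _)]
  gcongr
  calc (∫ x in 0..c, w x) * (∫ x in c..l, (w x)⁻¹) ^ 2
        = ∫ x in 0..c, w x * plateauTestFunction (fun x => (w x)⁻¹) c l x ^ 2 := by
        rw [← intervalIntegral.integral_mul_const]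
        refine integral_congr fun x hx => ?_
        rw [uIcc_of_le hc] at hx
        rw [plateauTestFunction_of_abs_le hcl (abs_le.2 ⟨by linarith [hx.1], hx.2⟩)]
    _ ≤ _ := integral_mono_interval le_rfl hc hcl
        (.of_forall fun x => mul_nonneg (hw0 x).le (sq_nonneg _)) (hcont.intervalIntegrable _ _)

theorem exists_rayleighQuotient_le (hc : 0 < c) (hcl : c < l) (hw : Continuous w)
    (hw0 : ∀ x, 0 < w x) (hweven : ∀ x ∈ Icc (-l) l, w (-x) = w x) :
    ∃ u : ℝ → ℝ, (∃ K, LipschitzWith K u) ∧ u (-l) = 0 ∧ u l = 0 ∧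
      (∃ x ∈ Icc (-l) l, u x ≠ 0) ∧
      rayleighQuotient l w u ≤ ((∫ x in 0..c, w x) * ∫ x in c..l, (w x)⁻¹)⁻¹ := by
  have hA : 0 < ∫ x in 0..c, w x := intervalIntegral_pos_of_pos (hw.intervalIntegrable _ _) hw0 hc
  have hB : 0 < ∫ x in c..l, (w x)⁻¹ := intervalIntegral_pos_of_pos
    ((hw.inv₀ fun x => (hw0 x).ne').intervalIntegrable _ _) (fun x => inv_pos.2 (hw0 x)) hcl
  have hden := two_mul_integral_mul_sq_le_integral_mul_plateauTestFunction_sq hc.le hcl.le hw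
    hw0 hweven
  refine ⟨plateauTestFunction (fun x => (w x)⁻¹) c l,
    exists_lipschitzWith_plateauTestFunction (hw.inv₀ fun x => (hw0 x).ne') hcl.le,
    plateauTestFunction_neg.trans (plateauTestFunction_self hc.le hcl.le),
    plateauTestFunction_self hc.le hcl.le, ⟨0, ⟨by linarith, by linarith⟩, ?_⟩, ?_⟩
  · rw [plateauTestFunction_of_abs_le hcl.le (by rw [abs_zero]; exact hc.le)]
    exact hB.ne'
  rw [rayleighQuotient, integral_mul_deriv_plateauTestFunction_sq hc.le hcl.le hw hw0 hweven,
    div_le_iff₀ (lt_of_lt_of_le (by positivity) hden)]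
  calc _ = ((∫ x in 0..c, w x) * ∫ x in c..l, (w x)⁻¹)⁻¹ *
        (2 * ((∫ x in 0..c, w x) * (∫ x in c..l, (w x)⁻¹) ^ 2)) := by field_simp
    _ ≤ _ := by gcongr

end plateauRayleigh

theorem exists_mul_exp_le_integral_exp {f : ℝ → ℝ} (hf : Continuous f) {c d x₀ θ : ℝ}
    (hcd : c < d) (hx₀ : x₀ ∈ Icc c d) (hθ : θ < f x₀) :
    ∃ η > 0, ∀ p ≥ 0, η * exp (p * θ) ≤ ∫ x in c..d, exp (p * f x) := by
  obtain ⟨δ, hδ, hnear⟩ :=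
    Metric.eventually_nhds_iff.1 (hf.continuousAt.eventually (lt_mem_nhds hθ))
  set c' := max c (x₀ - δ / 2)
  set d' := min d (x₀ + δ / 2)
  have hc'd' : c' < d' := by
    simp only [c', d', max_lt_iff, lt_min_iff]
    refine ⟨⟨?_, ?_⟩, ?_, ?_⟩ <;> linarith [hx₀.1, hx₀.2]
  have hθ' : ∀ x ∈ Icc c' d', θ < f x := fun x hx => hnear <| by
    rw [Real.dist_eq, abs_lt]
    constructor <;> linarith [le_max_right c (x₀ - δ / 2), min_le_right d (x₀ + δ / 2), hx.1, hx.2]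
  have hint : ∀ p a b, IntervalIntegrable (fun x => exp (p * f x)) volume a b := fun p a b =>
    (continuous_exp.comp (continuous_const.mul hf)).intervalIntegrable a b
  refine ⟨d' - c', sub_pos.2 hc'd', fun p hp => ?_⟩
  calc (d' - c') * exp (p * θ) = ∫ _ in c'..d', exp (p * θ) := by simp
    _ ≤ ∫ x in c'..d', exp (p * f x) :=
        integral_mono_on hc'd'.le intervalIntegrable_const (hint p _ _) fun x hx =>
          exp_le_exp.2 (mul_le_mul_of_nonneg_left (hθ' x hx).le hp)
    _ ≤ ∫ x in c..d, exp (p * f x) :=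
        integral_mono_interval (le_max_left _ _) hc'd'.le (min_le_left _ _)
          (.of_forall fun x => (exp_pos _).le) (hint p _ _)

theorem tendsto_integral_exp_div_integral_exp_of_lt {f : ℝ → ℝ} (hf : Continuous f)
    {a b c d x₀ : ℝ} (hab : a ≤ b) (hcd : c < d) (hx₀ : x₀ ∈ Icc c d)
    (hlt : ∀ x ∈ Icc a b, f x < f x₀) :
    Tendsto (fun p => (∫ x in a..b, exp (p * f x)) / ∫ x in c..d, exp (p * f x)) atTop (𝓝 0) := by
  obtain ⟨xm, hxm, hmax⟩ := isCompact_Icc.exists_isMaxOn (nonempty_Icc.2 hab) hf.continuousOn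
  have hm := hlt xm hxm
  set θ := (f xm + f x₀) / 2 with hθ
  obtain ⟨η, hη, hlow⟩ := exists_mul_exp_le_integral_exp hf hcd hx₀ (show θ < f x₀ by linarith)
  have hbound : ∀ p ≥ (0 : ℝ), (∫ x in a..b, exp (p * f x)) / (∫ x in c..d, exp (p * f x)) ≤
      (b - a) / η * exp (p * (f xm - θ)) := fun p hp => by
    have hup : ∫ x in a..b, exp (p * f x) ≤ (b - a) * exp (p * f xm) := by
      simpa using integral_mono_on (μ := volume) hab
        ((continuous_exp.comp (continuous_const.mul hf)).intervalIntegrable a b)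
        intervalIntegrable_const fun x hx =>
          exp_le_exp.2 (mul_le_mul_of_nonneg_left (hmax hx) hp)
    calc _ ≤ (b - a) * exp (p * f xm) / (η * exp (p * θ)) :=
          div_le_div₀ (by have := sub_nonneg.2 hab; positivity) hup (by positivity) (hlow p hp)
      _ = (b - a) / η * exp (p * (f xm - θ)) := by
          rw [mul_div_mul_comm, ← exp_sub, mul_sub]
  have hlim : Tendsto (fun p => (b - a) / η * exp (p * (f xm - θ))) atTop (𝓝 0) := by
    simpa using (tendsto_exp_atBot.comp (tendsto_id.atTop_mul_const_of_neg
      (show f xm - θ < 0 by linarith))).const_mul ((b - a) / η)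
  refine tendsto_of_tendsto_of_tendsto_of_le_of_le' tendsto_const_nhds hlim
    (.of_forall fun p => div_nonneg (integral_nonneg hab fun x _ => (exp_pos _).le)
      (integral_nonneg hcd.le fun x _ => (exp_pos _).le)) ?_
  filter_upwards [eventually_ge_atTop 0] with p hp using hbound p hp

theorem exists_separating_point {b : ℝ → ℝ} {l : ℝ} (hl : 0 < l)
    (hb : ContinuousOn b (Icc 0 l))
    (hB : sSup {x ∈ Icc 0 l | b x = sInf (b '' Icc 0 l)} <
      sInf {x ∈ Icc 0 l | b x = sSup (b '' Icc 0 l)}) :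
    ∃ c ∈ Ioo 0 l, ∃ x₁ ∈ Icc 0 c, ∃ x₂ ∈ Icc c l,
      (∀ x ∈ Icc c l, b x₁ < b x) ∧ ∀ x ∈ Icc 0 c, b x < b x₂ := by
  have hne : (Icc 0 l).Nonempty := nonempty_Icc.2 hl.le
  obtain ⟨x₁, hx₁, hb₁, hmin⟩ := isCompact_Icc.exists_sInf_image_eq_and_le hne hb
  obtain ⟨x₂, hx₂, hb₂, hmax⟩ := isCompact_Icc.exists_sSup_image_eq_and_ge hne hb
  have hS₁ : BddAbove {x ∈ Icc 0 l | b x = sInf (b '' Icc 0 l)} :=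
    bddAbove_Icc.mono fun x hx => hx.1
  have hS₂ : BddBelow {x ∈ Icc 0 l | b x = sSup (b '' Icc 0 l)} :=
    bddBelow_Icc.mono fun x hx => hx.1
  have h₁ := le_csSup hS₁ ⟨hx₁, hb₁.symm⟩
  have h₂ := csInf_le hS₂ ⟨hx₂, hb₂.symm⟩
  set s₁ := sSup {x ∈ Icc 0 l | b x = sInf (b '' Icc 0 l)}
  set s₂ := sInf {x ∈ Icc 0 l | b x = sSup (b '' Icc 0 l)}
  refine ⟨(s₁ + s₂) / 2, ⟨by linarith [hx₁.1], by linarith [hx₂.2]⟩, x₁,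
    ⟨hx₁.1, by linarith⟩, x₂, ⟨by linarith, hx₂.2⟩, fun x hx => ?_, fun x hx => ?_⟩
  · have hx' : x ∈ Icc 0 l := ⟨by linarith [hx.1, hx₁.1], hx.2⟩
    refine (hmin x hx').lt_of_ne fun h => ?_
    linarith [hx.1, le_csSup hS₁ ⟨hx', by rw [hb₁, h]⟩]
  · have hx' : x ∈ Icc 0 l := ⟨hx.1, by linarith [hx.2, hx₂.2]⟩
    refine (hmax x hx').lt_of_ne fun h => ?_
    linarith [hx.2, csInf_le hS₂ ⟨hx', by rw [hb₂, h]⟩]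

section lam1d

variable {l : ℝ} {b : ℝ → ℝ}

theorem lam1d_congr {b' : ℝ → ℝ} (h : EqOn b b' (uIcc (-l) l)) (p : ℝ) :
    lam1d l b p = lam1d l b' p := by
  have hI : ∀ g : ℝ → ℝ,
      ∫ x in (-l)..l, exp (-p * b x) * g x = ∫ x in (-l)..l, exp (-p * b' x) * g x :=
    fun g => integral_congr fun x hx => by rw [h hx]
  simp only [lam1d, hI]

theorem inv_le_lam1d (hl : 0 < l) (hb : Continuous b)
    (hbeven : ∀ x ∈ Icc (-l) l, b (-x) = b x) (p : ℝ) :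
    ((∫ x in 0..l, exp (-p * b x)) * ∫ x in 0..l, exp (p * b x))⁻¹ ≤ lam1d l b p := by
  have hw : Continuous fun x => exp (-p * b x) := by fun_prop
  have hinv : ∀ x, (exp (-p * b x))⁻¹ = exp (p * b x) := fun x => by rw [neg_mul, exp_neg, inv_inv]
  obtain ⟨u, hu, hul, hur, hne, -⟩ := exists_rayleighQuotient_le (half_pos hl) (half_lt_self hl)
    hw (fun x => exp_pos _) fun x hx => by rw [hbeven x hx]
  refine le_csInf ⟨_, u, hu, hul, hur, hne, rfl⟩ ?_
  rintro r ⟨u, ⟨K, hK⟩, hul, hur, hne, rfl⟩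
  have h := inv_integral_mul_integral_inv_le_rayleighQuotient hl hw
    (fun x => exp_pos _) (fun x hx => by rw [hbeven x hx]) hK hul hur hne
  simp only [hinv] at h
  exact h

theorem lam1d_le {c : ℝ} (hc : 0 < c) (hcl : c < l) (hb : Continuous b)
    (hbeven : ∀ x ∈ Icc (-l) l, b (-x) = b x) (p : ℝ) :
    lam1d l b p ≤ ((∫ x in 0..c, exp (-p * b x)) * ∫ x in c..l, exp (p * b x))⁻¹ := by
  have hinv : ∀ x, (exp (-p * b x))⁻¹ = exp (p * b x) := fun x => by rw [neg_mul, exp_neg, inv_inv]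
  obtain ⟨u, hu, hul, hur, hne, hR⟩ := exists_rayleighQuotient_le hc hcl
    (w := fun x => exp (-p * b x)) (by fun_prop) (fun x => exp_pos _)
    fun x hx => by rw [hbeven x hx]
  simp only [hinv] at hR
  refine le_trans ?_ hR
  refine csInf_le ⟨0, ?_⟩ ⟨u, hu, hul, hur, hne, rfl⟩
  rintro r ⟨u, -, -, -, -, rfl⟩
  exact rayleighQuotient_nonneg (hc.trans hcl).le (fun x => exp_pos _) u

end lam1d

theorem tendsto_lam1d_mul_integral_exp_mul_integral_exp {l : ℝ} (hl : 0 < l) {b : ℝ → ℝ}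
    (hb : Continuous b) (hbeven : ∀ x ∈ Icc (-l) l, b (-x) = b x)
    (hB : sSup {x ∈ Icc 0 l | b x = sInf (b '' Icc 0 l)} <
      sInf {x ∈ Icc 0 l | b x = sSup (b '' Icc 0 l)}) :
    Tendsto (fun p => lam1d l b p * (∫ x in (0:ℝ)..l, exp (-p * b x)) *
      ∫ y in (0:ℝ)..l, exp (p * b y)) atTop (𝓝 1) := by
  obtain ⟨c, hc, x₁, hx₁, x₂, hx₂, hmin, hmax⟩ := exists_separating_point hl hb.continuousOn hB
  have hρ : ∀ p a a', IntervalIntegrable (fun x => exp (-p * b x)) volume a a' := fun p _ _ =>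
    (by fun_prop : Continuous fun x => exp (-p * b x)).intervalIntegrable _ _
  have hσ : ∀ p a a', IntervalIntegrable (fun x => exp (p * b x)) volume a a' := fun p _ _ =>
    (by fun_prop : Continuous fun x => exp (p * b x)).intervalIntegrable _ _
  have hρ_pos : ∀ p {a a'}, a < a' → 0 < ∫ x in a..a', exp (-p * b x) := fun p _ _ h =>
    intervalIntegral_pos_of_pos (hρ p _ _) (fun _ => exp_pos _) h
  have hσ_pos : ∀ p {a a'}, a < a' → 0 < ∫ x in a..a', exp (p * b x) := fun p _ _ h =>
    intervalIntegral_pos_of_pos (hσ p _ _) (fun _ => exp_pos _) h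
  have hA : Tendsto (fun p => (∫ x in (0:ℝ)..l, exp (-p * b x)) / ∫ x in (0:ℝ)..c, exp (-p * b x))
      atTop (𝓝 1) := by
    have h := (tendsto_integral_exp_div_integral_exp_of_lt hb.neg hc.2.le hc.1 hx₁
      fun x hx => neg_lt_neg (hmin x hx)).const_add 1
    simp only [Pi.neg_apply, ← neg_mul_comm, add_zero] at h
    refine h.congr fun p => ?_
    rw [← integral_add_adjacent_intervals (hρ p 0 c) (hρ p c l), add_div,
      div_self (hρ_pos p hc.1).ne']
  have hB : Tendsto (fun p => (∫ y in (0:ℝ)..l, exp (p * b y)) / ∫ y in c..l, exp (p * b y))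
      atTop (𝓝 1) := by
    have h := (tendsto_integral_exp_div_integral_exp_of_lt hb hc.1.le hc.2 hx₂ hmax).add_const 1
    simp only [zero_add] at h
    refine h.congr fun p => ?_
    rw [← integral_add_adjacent_intervals (hσ p 0 c) (hσ p c l), add_div,
      div_self (hσ_pos p hc.2).ne']
  refine tendsto_of_tendsto_of_tendsto_of_le_of_le tendsto_const_nhds
    (by simpa using hA.mul hB) (fun p => ?_) (fun p => ?_)
  · have hAB := mul_pos (hρ_pos p hl) (hσ_pos p hl)
    have h := mul_le_mul_of_nonneg_right (inv_le_lam1d hl hb hbeven p) hAB.le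
    rwa [inv_mul_cancel₀ hAB.ne', ← mul_assoc] at h
  · have := hρ_pos p hl
    have := hσ_pos p hl
    calc _ ≤ ((∫ x in (0:ℝ)..c, exp (-p * b x)) * ∫ y in c..l, exp (p * b y))⁻¹ *
          (∫ x in (0:ℝ)..l, exp (-p * b x)) * ∫ y in (0:ℝ)..l, exp (p * b y) := by
          gcongr
          exact lam1d_le hc.1 hc.2 hb hbeven p
      _ = _ := by field_simp

theorem principal_eigenvalue_asymptotics_1d (l : ℝ) (hl : 0 < l)
    (b : ℝ → ℝ) (K : NNReal) (hb : LipschitzOnWith K b (Set.Icc (-l) l))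
    (hbeven : ∀ x ∈ Set.Icc (-l) l, b (-x) = b x)
    (hB : sSup {x ∈ Set.Icc 0 l | b x = sInf (b '' Set.Icc 0 l)} <
          sInf {x ∈ Set.Icc 0 l | b x = sSup (b '' Set.Icc 0 l)}) :
    Filter.Tendsto
      (fun p => lam1d l b p * (∫ x in (0:ℝ)..l, Real.exp (-p * b x)) *
        (∫ y in (0:ℝ)..l, Real.exp (p * b y)))
      Filter.atTop (nhds 1) := by
  -- only the values of `b` on `[-l, l]` enter the statement
  set b' : ℝ → ℝ := fun x => b (projIcc (-l) l (by linarith) x)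
  have hb' : Continuous b' :=
    hb.continuousOn.comp_continuous (continuous_subtype_val.comp continuous_projIcc)
      fun x => (projIcc (-l) l _ x).2
  have heq : EqOn b b' (Icc (-l) l) := fun x hx => by simp only [b', projIcc_of_mem _ hx]
  have heq₀ : EqOn b b' (Icc 0 l) := heq.mono (Icc_subset_Icc (by linarith) le_rfl)
  have hb'even : ∀ x ∈ Icc (-l) l, b' (-x) = b' x := fun x hx => by
    rw [← heq hx, ← heq ⟨by linarith [hx.2], by linarith [hx.1]⟩, hbeven x hx]
  have hsep : ∀ y, {x ∈ Icc 0 l | b x = y} = {x ∈ Icc 0 l | b' x = y} := fun y =>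
    sep_ext_iff.2 fun x hx => by rw [heq₀ hx]
  rw [heq₀.image_eq, hsep, hsep] at hB
  refine (tendsto_lam1d_mul_integral_exp_mul_integral_exp hl hb' hb'even hB).congr fun p => ?_
  have hint : ∀ s : ℝ, ∫ x in (0:ℝ)..l, Real.exp (s * b' x) = ∫ x in (0:ℝ)..l, Real.exp (s * b x) :=
    fun s => integral_congr fun x hx => by rw [heq₀ (uIcc_of_le hl.le ▸ hx)]
  rw [hint, hint, lam1d_congr (uIcc_of_le (by linarith : -l ≤ l) ▸ heq.symm)]
end

section
/- Let l > 0 and let b : [−l, l] → ℝ be Lipschitz continuous and even. Then for every p ∈ ℝ, the variational principal eigenvalue satisfies the lower bound λ₁(p) ≥ (∫₀ˡ e^{−p b(x)} dx)⁻¹ (∫₀ˡ e^{p b(y)} dy)⁻¹. -/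
open MeasureTheory intervalIntegral

open Set

/-! For `x ∈ [0, l]` we have `u x = -∫ₓˡ u'`, so Cauchy–Schwarz with the weight `w = e^{-p b}` gives
`u x ^ 2 ≤ (∫₀ˡ w⁻¹) (∫₀ˡ w u'²)`; integrating against `w` over `[0, l]` yields
`∫₀ˡ w u² ≤ (∫₀ˡ w) (∫₀ˡ w⁻¹) (∫₀ˡ w u'²)`. On `[-l, 0]` the same argument runs from `u (-l) = 0`,
and since `b` is even the constant is the same, so adding the two halves bounds the Rayleigh
quotient below by `((∫₀ˡ w) (∫₀ˡ w⁻¹))⁻¹`. -/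

theorem sq_integral_le_integral_inv_mul_integral_mul_sq {α : Type*} [MeasurableSpace α]
    {μ : Measure α} {w f : α → ℝ} (hw : ∀ᵐ x ∂μ, 0 < w x)
    (hw_inv : Integrable (fun x => (w x)⁻¹) μ) (hf : Integrable f μ)
    (hwf : Integrable (fun x => w x * f x ^ 2) μ) :
    (∫ x, f x ∂μ) ^ 2 ≤ (∫ x, (w x)⁻¹ ∂μ) * ∫ x, w x * f x ^ 2 ∂μ := by
  have hquadratic : ∀ t : ℝ, 0 ≤ (∫ x, (w x)⁻¹ ∂μ) * (t * t) + (-2 * ∫ x, f x ∂μ) * t +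
      ∫ x, w x * f x ^ 2 ∂μ := by
    intro t
    -- expand `0 ≤ ∫ w (t / w - f)²`
    have hexpand : (fun x => w x * (t * (w x)⁻¹ - f x) ^ 2) =ᵐ[μ]
        fun x => t ^ 2 * (w x)⁻¹ - 2 * t * f x + w x * f x ^ 2 := by
      filter_upwards [hw] with x hx
      field_simp
      ring
    have hnonneg : 0 ≤ ∫ x, w x * (t * (w x)⁻¹ - f x) ^ 2 ∂μ :=
      integral_nonneg_of_ae (by filter_upwards [hw] with x hx; positivity)
    have hlinear : Integrable (fun x => t ^ 2 * (w x)⁻¹ - 2 * t * f x) μ :=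
      (hw_inv.const_mul _).sub (hf.const_mul _)
    rw [integral_congr_ae hexpand, integral_add hlinear hwf,
      integral_sub (hw_inv.const_mul _) (hf.const_mul _), MeasureTheory.integral_const_mul,
      MeasureTheory.integral_const_mul] at hnonneg
    linarith
  have hdiscrim := discrim_le_zero hquadratic
  rw [discrim] at hdiscrim
  nlinarith

theorem integral_neg_eq_integral_of_even {f : ℝ → ℝ} {l : ℝ} (hl : 0 ≤ l)
    (hf : ∀ x ∈ Icc 0 l, f (-x) = f x) : ∫ x in -l..0, f x = ∫ x in 0..l, f x := by
  calc ∫ x in -l..0, f x = ∫ x in 0..l, f (-x) := by simp [integral_comp_neg]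
    _ = ∫ x in 0..l, f x := integral_congr fun x hx => hf x (by rwa [uIcc_of_le hl] at hx)

namespace LipschitzWith

variable {u : ℝ → ℝ} {K : NNReal}

theorem integral_deriv_eq_sub (hu : LipschitzWith K u) (a b : ℝ) :
    ∫ x in a..b, deriv u x = u b - u a :=
  hu.lipschitzOnWith.absolutelyContinuousOnInterval.integral_deriv_eq_sub

theorem intervalIntegrable_deriv (hu : LipschitzWith K u) (a b : ℝ) :
    IntervalIntegrable (deriv u) volume a b :=
  hu.lipschitzOnWith.absolutelyContinuousOnInterval.intervalIntegrable_deriv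

theorem intervalIntegrable_mul_deriv_sq (hu : LipschitzWith K u) {w : ℝ → ℝ} {a b : ℝ}
    (hw : ContinuousOn w (uIcc a b)) :
    IntervalIntegrable (fun x => w x * deriv u x ^ 2) volume a b := by
  have hsq : IntervalIntegrable (fun x => deriv u x ^ 2) volume a b := by
    rw [intervalIntegrable_iff]
    refine Measure.integrableOn_of_bounded (M := (K : ℝ) ^ 2) measure_Ioc_lt_top.ne
      ((measurable_deriv u).pow_const 2).aestronglyMeasurable (ae_of_all _ fun x => ?_)
    rw [Real.norm_eq_abs, abs_pow]
    exact pow_le_pow_left₀ (abs_nonneg _) (norm_deriv_le_of_lipschitz hu) 2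
  exact hsq.continuousOn_mul hw

variable {w : ℝ → ℝ} {a c : ℝ}

theorem sq_sub_le_integral_inv_mul_integral_mul_deriv_sq (hu : LipschitzWith K u) (hac : a ≤ c)
    (hw : ContinuousOn w (Icc a c)) (hpos : ∀ x ∈ Icc a c, 0 < w x) :
    (u c - u a) ^ 2 ≤ (∫ x in a..c, (w x)⁻¹) * ∫ x in a..c, w x * deriv u x ^ 2 := by
  have hw_inv : ContinuousOn (fun x => (w x)⁻¹) (Icc a c) :=
    hw.inv₀ fun x hx => (hpos x hx).ne'
  rw [← uIcc_of_le hac] at hw hw_inv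
  rw [← hu.integral_deriv_eq_sub, integral_of_le hac, integral_of_le hac, integral_of_le hac]
  exact sq_integral_le_integral_inv_mul_integral_mul_sq
    (ae_restrict_of_forall_mem measurableSet_Ioc fun x hx => hpos x (Ioc_subset_Icc_self hx))
    hw_inv.intervalIntegrable.1 (hu.intervalIntegrable_deriv a c).1
    (hu.intervalIntegrable_mul_deriv_sq hw).1

theorem sq_le_integral_inv_mul_integral_mul_deriv_sq (hu : LipschitzWith K u)
    (hw : ContinuousOn w (Icc a c)) (hpos : ∀ x ∈ Icc a c, 0 < w x) (hend : u a = 0 ∨ u c = 0)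
    {x : ℝ} (hx : x ∈ Icc a c) :
    u x ^ 2 ≤ (∫ y in a..c, (w y)⁻¹) * ∫ y in a..c, w y * deriv u y ^ 2 := by
  have hac : a ≤ c := hx.1.trans hx.2
  have hw_inv : IntervalIntegrable (fun y => (w y)⁻¹) volume a c :=
    (hw.inv₀ fun y hy => (hpos y hy).ne').intervalIntegrable_of_Icc hac
  have hD : IntervalIntegrable (fun y => w y * deriv u y ^ 2) volume a c :=
    hu.intervalIntegrable_mul_deriv_sq (by rwa [uIcc_of_le hac])
  have hmono : ∀ s t, a ≤ s → s ≤ t → t ≤ c →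
      (∫ y in s..t, (w y)⁻¹) * (∫ y in s..t, w y * deriv u y ^ 2) ≤
        (∫ y in a..c, (w y)⁻¹) * ∫ y in a..c, w y * deriv u y ^ 2 := by
    intro s t has hst htc
    have hpos' : ∀ y ∈ Icc s t, 0 < w y := fun y hy => hpos y ⟨has.trans hy.1, hy.2.trans htc⟩
    have hnonneg : ∀ᵐ y ∂volume.restrict (Ioc a c), 0 ≤ (w y)⁻¹ ∧ 0 ≤ w y * deriv u y ^ 2 :=
      ae_restrict_of_forall_mem measurableSet_Ioc fun y hy =>
        have := hpos y (Ioc_subset_Icc_self hy); ⟨by positivity, by positivity⟩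
    exact mul_le_mul
      (integral_mono_interval has hst htc (hnonneg.mono fun _ h => h.1) hw_inv)
      (integral_mono_interval has hst htc (hnonneg.mono fun _ h => h.2) hD)
      (integral_nonneg hst fun y hy => by have := hpos' y hy; positivity)
      (integral_nonneg hac fun y hy => by have := hpos y hy; positivity)
  rcases hend with ha | hc
  · have := hu.sq_sub_le_integral_inv_mul_integral_mul_deriv_sq hx.1
      (hw.mono (Icc_subset_Icc_right hx.2)) fun y hy => hpos y ⟨hy.1, hy.2.trans hx.2⟩
    rw [ha, sub_zero] at this
    exact this.trans (hmono a x le_rfl hx.1 hx.2)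
  · have := hu.sq_sub_le_integral_inv_mul_integral_mul_deriv_sq hx.2
      (hw.mono (Icc_subset_Icc_left hx.1)) fun y hy => hpos y ⟨hx.1.trans hy.1, hy.2⟩
    rw [hc, zero_sub, neg_sq] at this
    exact this.trans (hmono x c hx.1 hx.2 le_rfl)

theorem integral_mul_sq_le (hu : LipschitzWith K u) (hac : a ≤ c)
    (hw : ContinuousOn w (Icc a c)) (hpos : ∀ x ∈ Icc a c, 0 < w x) (hend : u a = 0 ∨ u c = 0) :
    ∫ x in a..c, w x * u x ^ 2 ≤
      (∫ x in a..c, w x) * ((∫ x in a..c, (w x)⁻¹) * ∫ x in a..c, w x * deriv u x ^ 2) := by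
  have hw' : ContinuousOn w (uIcc a c) := by rwa [uIcc_of_le hac]
  rw [← intervalIntegral.integral_mul_const]
  refine integral_mono_on hac (hw'.mul (hu.continuous.pow 2).continuousOn).intervalIntegrable
    (hw'.mul continuousOn_const).intervalIntegrable fun x hx => ?_
  exact mul_le_mul_of_nonneg_left
    (hu.sq_le_integral_inv_mul_integral_mul_deriv_sq hw hpos hend hx) (hpos x hx).le

theorem integral_mul_sq_le_mul_integral_mul_deriv_sq (hu : LipschitzWith K u) {m C : ℝ}
    (ham : a ≤ m) (hmc : m ≤ c) (hw : ContinuousOn w (Icc a c)) (hpos : ∀ x ∈ Icc a c, 0 < w x)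
    (ha : u a = 0) (hc : u c = 0)
    (hC_left : (∫ x in a..m, w x) * ∫ x in a..m, (w x)⁻¹ ≤ C)
    (hC_right : (∫ x in m..c, w x) * ∫ x in m..c, (w x)⁻¹ ≤ C) :
    ∫ x in a..c, w x * u x ^ 2 ≤ C * ∫ x in a..c, w x * deriv u x ^ 2 := by
  have hac : a ≤ c := ham.trans hmc
  have hw_left : ContinuousOn w (Icc a m) := hw.mono (Icc_subset_Icc_right hmc)
  have hw_right : ContinuousOn w (Icc m c) := hw.mono (Icc_subset_Icc_left ham)
  have hpos_left : ∀ x ∈ Icc a m, 0 < w x := fun x hx => hpos x ⟨hx.1, hx.2.trans hmc⟩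
  have hpos_right : ∀ x ∈ Icc m c, 0 < w x := fun x hx => hpos x ⟨ham.trans hx.1, hx.2⟩
  have hD_left : 0 ≤ ∫ x in a..m, w x * deriv u x ^ 2 :=
    integral_nonneg ham fun x hx => by have := hpos_left x hx; positivity
  have hD_right : 0 ≤ ∫ x in m..c, w x * deriv u x ^ 2 :=
    integral_nonneg hmc fun x hx => by have := hpos_right x hx; positivity
  have hN : ∀ {s t}, ContinuousOn w (Icc s t) → s ≤ t →
      IntervalIntegrable (fun x => w x * u x ^ 2) volume s t := fun hw hst =>
    (hw.mul (hu.continuous.pow 2).continuousOn).intervalIntegrable_of_Icc hst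
  have hD : ∀ {s t}, ContinuousOn w (Icc s t) → s ≤ t →
      IntervalIntegrable (fun x => w x * deriv u x ^ 2) volume s t := fun hw hst =>
    hu.intervalIntegrable_mul_deriv_sq (by rwa [uIcc_of_le hst])
  rw [← integral_add_adjacent_intervals (hN hw_left ham) (hN hw_right hmc),
    ← integral_add_adjacent_intervals (hD hw_left ham) (hD hw_right hmc)]
  calc _ ≤ (∫ x in a..m, w x) * ((∫ x in a..m, (w x)⁻¹) * ∫ x in a..m, w x * deriv u x ^ 2) +
        (∫ x in m..c, w x) * ((∫ x in m..c, (w x)⁻¹) * ∫ x in m..c, w x * deriv u x ^ 2) :=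
        add_le_add (hu.integral_mul_sq_le ham hw_left hpos_left (.inl ha))
          (hu.integral_mul_sq_le hmc hw_right hpos_right (.inr hc))
    _ ≤ C * (∫ x in a..m, w x * deriv u x ^ 2) + C * ∫ x in m..c, w x * deriv u x ^ 2 := by
        rw [← mul_assoc, ← mul_assoc]
        exact add_le_add (mul_le_mul_of_nonneg_right hC_left hD_left)
          (mul_le_mul_of_nonneg_right hC_right hD_right)
    _ = _ := (mul_add _ _ _).symm

end LipschitzWith

theorem principal_eigenvalue_lower_bound_1d (l : ℝ) (hl : 0 < l)
    (b : ℝ → ℝ) (K : NNReal) (hb : LipschitzOnWith K b (Set.Icc (-l) l))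
    (hbeven : ∀ x ∈ Set.Icc (-l) l, b (-x) = b x) (p : ℝ) :
    (∫ x in (0:ℝ)..l, Real.exp (-p * b x))⁻¹ *
      (∫ y in (0:ℝ)..l, Real.exp (p * b y))⁻¹ ≤ lam1d l b p := by
  set w : ℝ → ℝ := fun x => Real.exp (-p * b x)
  have hw : ContinuousOn w (Icc (-l) l) :=
    Real.continuous_exp.comp_continuousOn (continuousOn_const.mul hb.continuousOn)
  have hpos : ∀ x, 0 < w x := fun x => Real.exp_pos _
  have hw_inv : (fun y => Real.exp (p * b y)) = fun y => (w y)⁻¹ := by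
    funext y; simp only [w, neg_mul, Real.exp_neg, inv_inv]
  have heven : ∀ x ∈ Icc 0 l, w (-x) = w x := fun x hx => by
    simp only [w, hbeven x ⟨by linarith [hx.1], hx.2⟩]
  have hC : (∫ x in -l..0, w x) * ∫ x in -l..0, (w x)⁻¹ =
      (∫ x in 0..l, w x) * ∫ x in 0..l, (w x)⁻¹ := by
    rw [integral_neg_eq_integral_of_even hl.le heven,
      integral_neg_eq_integral_of_even hl.le fun x hx => by rw [heven x hx]]
  have hC_pos : 0 < (∫ x in 0..l, w x) * ∫ x in 0..l, (w x)⁻¹ := by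
    have hw' : ContinuousOn w (Icc 0 l) := hw.mono (Icc_subset_Icc_left (by linarith))
    exact mul_pos
      (intervalIntegral_pos_of_pos_on (hw'.intervalIntegrable_of_Icc hl.le) (fun x _ => hpos x) hl)
      (intervalIntegral_pos_of_pos_on ((hw'.inv₀ fun x _ => (hpos x).ne').intervalIntegrable_of_Icc
        hl.le) (fun x _ => inv_pos.2 (hpos x)) hl)
  rw [hw_inv, ← mul_inv, lam1d]
  refine le_csInf ⟨_, fun x => l - |x|,
    ⟨0 + 1, (LipschitzWith.const l).sub lipschitzWith_one_norm⟩, by simp [abs_of_pos hl],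
    by simp [abs_of_pos hl], ⟨0, ⟨by linarith, hl.le⟩, by simp [hl.ne']⟩, rfl⟩ ?_
  rintro r ⟨u, ⟨Ku, hu⟩, hul, hur, ⟨x₀, hx₀, hux₀⟩, rfl⟩
  have hN : 0 < ∫ x in -l..l, w x * u x ^ 2 :=
    integral_pos (by linarith) (hw.mul (hu.continuous.pow 2).continuousOn)
      (fun x _ => by have := hpos x; positivity) ⟨x₀, hx₀, mul_pos (hpos x₀) (by positivity)⟩
  rw [le_div_iff₀ hN, inv_mul_le_iff₀ hC_pos]
  exact hu.integral_mul_sq_le_mul_integral_mul_deriv_sq (by linarith) hl.le hw (fun x _ => hpos x)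
    hul hur hC.le le_rfl
end

section
/- Let l > 0 and let b : [0, l] → ℝ be continuous. Define D₀ := (0,l) × (0,l) and D₁ := {(x,y) : 0 < y < x < l}, and set ω₀ := max over the closure of D₀ of (b(y) − b(x)) and ω₁ := max over the closure of D₁ of (b(y) − b(x)). If ω₀ > ω₁, then the ratio (∬_{D₁} e^{p(b(y)−b(x))} dx dy) / (∬_{D₀} e^{p(b(y)−b(x))} dx dy) tends to 0 as p → ∞. -/
/-!
On the closed square `b y - b x` attains its maximum `ω₀`, so for any `c` between `ω₁` and
`ω₀` it exceeds `c` on a nonempty open subset `V` of `D₀`. Hence the denominator is at least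
`|V| e^{pc}`, while the numerator is at most `|D₁| e^{pω₁}`, and the ratio decays like
`e^{-p(c - ω₁)}`.
-/

open MeasureTheory Filter Set Topology
open scoped ENNReal

theorem ContinuousOn.inter_preimage_nonempty_of_mem_closure {X Y : Type*} [TopologicalSpace X]
    [TopologicalSpace Y] {f : X → Y} {D : Set X} {t : Set Y} {z : X}
    (hf : ContinuousOn f (closure D)) (hz : z ∈ closure D) (ht : IsOpen t) (hfz : f z ∈ t) :
    (D ∩ f ⁻¹' t).Nonempty := by
  have : NeBot (𝓝[D] z) := mem_closure_iff_nhdsWithin_neBot.mp hz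
  have hev : ∀ᶠ x in 𝓝[D] z, f x ∈ t :=
    ((hf z hz).mono subset_closure).eventually (ht.mem_nhds hfz)
  obtain ⟨x, hxD, hxt⟩ := (hev.and self_mem_nhdsWithin).exists
  exact ⟨x, hxt, hxD⟩

theorem exists_isOpen_subset_lt_of_lt_sSup_image_closure {X Y : Type*} [TopologicalSpace X]
    [ConditionallyCompleteLinearOrder Y] [TopologicalSpace Y] [OrderTopology Y] {f : X → Y}
    {D : Set X} {c : Y} (hD : IsOpen D) (hDne : D.Nonempty) (hK : IsCompact (closure D))
    (hf : ContinuousOn f (closure D)) (hc : c < sSup (f '' closure D)) :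
    ∃ V ⊆ D, IsOpen V ∧ V.Nonempty ∧ ∀ x ∈ V, c < f x := by
  obtain ⟨z, hz, hfz⟩ : sSup (f '' closure D) ∈ f '' closure D :=
    (hK.image_of_continuousOn hf).sSup_mem (hDne.closure.image f)
  exact ⟨D ∩ f ⁻¹' Ioi c, inter_subset_left,
    (hf.mono subset_closure).isOpen_inter_preimage hD isOpen_Ioi,
    hf.inter_preimage_nonempty_of_mem_closure hz isOpen_Ioi (hfz ▸ hc), fun _ hx => hx.2⟩

section Laplace

variable {X : Type*} [MeasurableSpace X] {μ : Measure X} {f : X → ℝ} {p : ℝ}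

theorem setIntegral_exp_mul_le {S : Set X} {a : ℝ} (hp : 0 ≤ p) (hS : μ S ≠ ∞)
    (hfS : ∀ x ∈ S, f x ≤ a) :
    ∫ x in S, Real.exp (p * f x) ∂μ ≤ μ.real S * Real.exp (p * a) := by
  have hbound : ∀ x ∈ S, ‖Real.exp (p * f x)‖ ≤ Real.exp (p * a) := fun x hx => by
    rw [Real.norm_eq_abs, abs_of_pos (Real.exp_pos _)]
    exact Real.exp_le_exp.mpr (mul_le_mul_of_nonneg_left (hfS x hx) hp)
  calc ∫ x in S, Real.exp (p * f x) ∂μ ≤ ‖∫ x in S, Real.exp (p * f x) ∂μ‖ :=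
        Real.le_norm_self _
    _ ≤ Real.exp (p * a) * μ.real S :=
      norm_setIntegral_le_of_norm_le_const hS.lt_top hbound
    _ = μ.real S * Real.exp (p * a) := mul_comm _ _

theorem measureReal_mul_exp_le_setIntegral_exp {T V : Set X} {c : ℝ} (hp : 0 ≤ p)
    (hVT : V ⊆ T) (hV : MeasurableSet V) (hVtop : μ V ≠ ∞) (hfV : ∀ x ∈ V, c ≤ f x)
    (hint : IntegrableOn (fun x => Real.exp (p * f x)) T μ) :
    μ.real V * Real.exp (p * c) ≤ ∫ x in T, Real.exp (p * f x) ∂μ := by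
  calc μ.real V * Real.exp (p * c) = Real.exp (p * c) * μ.real V := mul_comm _ _
    _ ≤ ∫ x in V, Real.exp (p * f x) ∂μ :=
      setIntegral_ge_of_const_le_real hV hVtop
        (fun x hx => Real.exp_le_exp.mpr (mul_le_mul_of_nonneg_left (hfV x hx) hp))
        (hint.mono_set hVT)
    _ ≤ ∫ x in T, Real.exp (p * f x) ∂μ :=
      setIntegral_mono_set hint (Eventually.of_forall fun _ => (Real.exp_pos _).le)
        hVT.eventuallyLE

theorem tendsto_setIntegral_exp_div_setIntegral_exp_atTop_zero {S T V : Set X} {a c : ℝ}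
    (hS : μ S ≠ ∞) (hfS : ∀ x ∈ S, f x ≤ a) (hVT : V ⊆ T) (hV : MeasurableSet V)
    (hV0 : μ V ≠ 0) (hVtop : μ V ≠ ∞) (hfV : ∀ x ∈ V, c ≤ f x) (hac : a < c)
    (hint : ∀ p, IntegrableOn (fun x => Real.exp (p * f x)) T μ) :
    Tendsto (fun p => (∫ x in S, Real.exp (p * f x) ∂μ) / ∫ x in T, Real.exp (p * f x) ∂μ)
      atTop (𝓝 0) := by
  have hVpos : 0 < μ.real V := ENNReal.toReal_pos hV0 hVtop
  have hbound :
      Tendsto (fun p : ℝ => μ.real S / μ.real V * Real.exp (p * (a - c))) atTop (𝓝 0) := by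
    have h := (Real.tendsto_exp_atBot.comp
      (tendsto_id.atTop_mul_const_of_neg (sub_neg.mpr hac))).const_mul (μ.real S / μ.real V)
    simpa using h
  refine squeeze_zero' (Eventually.of_forall fun p => ?_) ?_ hbound
  · exact div_nonneg (integral_nonneg fun _ => (Real.exp_pos _).le)
      (integral_nonneg fun _ => (Real.exp_pos _).le)
  filter_upwards [eventually_ge_atTop 0] with p hp
  calc (∫ x in S, Real.exp (p * f x) ∂μ) / ∫ x in T, Real.exp (p * f x) ∂μ
      ≤ (μ.real S * Real.exp (p * a)) / (μ.real V * Real.exp (p * c)) :=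
        div_le_div₀ (by positivity) (setIntegral_exp_mul_le hp hS hfS) (by positivity)
          (measureReal_mul_exp_le_setIntegral_exp hp hVT hV hVtop hfV (hint p))
    _ = μ.real S / μ.real V * Real.exp (p * (a - c)) := by
        rw [mul_div_mul_comm, ← Real.exp_sub, mul_sub]

end Laplace

theorem ratio_of_laplace_integrals_tendsto_zero (l : ℝ) (hl : 0 < l)
    (b : ℝ → ℝ) (hb : ContinuousOn b (Set.Icc 0 l)) :
    let D₀ : Set (ℝ × ℝ) := Set.Ioo 0 l ×ˢ Set.Ioo 0 l
    let D₁ : Set (ℝ × ℝ) := {z | 0 < z.2 ∧ z.2 < z.1 ∧ z.1 < l}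
    let ω₀ : ℝ := sSup ((fun z : ℝ × ℝ => b z.2 - b z.1) '' closure D₀)
    let ω₁ : ℝ := sSup ((fun z : ℝ × ℝ => b z.2 - b z.1) '' closure D₁)
    ω₁ < ω₀ →
    Filter.Tendsto
      (fun p => (∫ z in D₁, Real.exp (p * (b z.2 - b z.1))) /
        (∫ z in D₀, Real.exp (p * (b z.2 - b z.1))))
      Filter.atTop (nhds 0) := by
  intro D₀ D₁ ω₀ ω₁ hω
  set f : ℝ × ℝ → ℝ := fun z => b z.2 - b z.1
  have hD₀open : IsOpen D₀ := isOpen_Ioo.prod isOpen_Ioo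
  have hD₀bdd : Bornology.IsBounded D₀ :=
    (Metric.isBounded_Ioo 0 l).prod (Metric.isBounded_Ioo 0 l)
  have hD₁D₀ : D₁ ⊆ D₀ := fun z hz =>
    ⟨⟨hz.1.trans hz.2.1, hz.2.2⟩, hz.1, hz.2.1.trans hz.2.2⟩
  have hclD₀ : closure D₀ = Icc 0 l ×ˢ Icc 0 l := by
    rw [closure_prod_eq, closure_Ioo hl.ne]
  have hK : IsCompact (closure D₀) := hclD₀ ▸ isCompact_Icc.prod isCompact_Icc
  have hf : ContinuousOn f (closure D₀) := hclD₀ ▸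
    (hb.comp continuous_snd.continuousOn fun _ hz => hz.2).sub
      (hb.comp continuous_fst.continuousOn fun _ hz => hz.1)
  have hclD₁ : closure D₁ ⊆ closure D₀ := closure_mono hD₁D₀
  have hfD₁ : ∀ z ∈ D₁, f z ≤ ω₁ := fun z hz =>
    le_csSup ((hK.of_isClosed_subset isClosed_closure hclD₁).bddAbove_image (hf.mono hclD₁))
      (mem_image_of_mem f (subset_closure hz))
  obtain ⟨c, hω₁c, hcω₀⟩ := exists_between hω
  obtain ⟨V, hVD₀, hVopen, hVne, hfV⟩ := exists_isOpen_subset_lt_of_lt_sSup_image_closure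
    hD₀open ((nonempty_Ioo.mpr hl).prod (nonempty_Ioo.mpr hl)) hK hf hcω₀
  have hint (p : ℝ) : IntegrableOn (fun z => Real.exp (p * f z)) D₀ :=
    ((Real.continuous_exp.comp_continuousOn (continuousOn_const.mul hf)).integrableOn_compact
      hK).mono_set subset_closure
  exact tendsto_setIntegral_exp_div_setIntegral_exp_atTop_zero
    (hD₀bdd.subset hD₁D₀).measure_lt_top.ne hfD₁ hVD₀ hVopen.measurableSet
    (hVopen.measure_ne_zero volume hVne) (hD₀bdd.subset hVD₀).measure_lt_top.ne
    (fun z hz => (hfV z hz).le) hω₁c hint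
end

section
/- Let L > 0 and μ > 0, and let g : [0, L] → ℝ be continuous with g(x) > 0 for all x ∈ (0, L] and lim_{x→0⁺} x^{−μ} g(x) = 1. Then lim_{p→∞} p^{1/μ} ∫₀ᴸ e^{−p g(x)} dx = Γ(1/μ + 1), where Γ is the Gamma function; that is, ∫₀ᴸ e^{−pg(x)} dx is asymptotically equivalent to Γ(1/μ + 1) p^{−1/μ} as p → ∞. -/
/-!
Laplace's method. Substituting `y = p ^ (1 / μ) * x` turns `p ^ (1 / μ) * ∫₀ᵀ exp (-p a x ^ μ) dx`
into `∫₀^{p ^ (1 / μ) T} exp (-a y ^ μ) dy`, which tends to `a ^ (-1 / μ) Γ(1 / μ + 1)`.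
Given `c > 1`, near `0` we have `g x ≤ c x ^ μ`, which bounds the integral from below by this
model with `a = c`. Given `c < 1`, near `0` we have `c x ^ μ ≤ g x`, and away from `0` compactness
gives `g ≥ m > 0`, so the integral is at most the model with `a = c` plus `L exp (-p m)`, which is
negligible against `p ^ (-1 / μ)`. As `c → 1` both bounds tend to `Γ(1 / μ + 1)`.
-/

open MeasureTheory Real Filter Set Topology

lemma tendsto_rpow_inv_mul_intervalIntegral_exp_neg_mul_rpow {μ a T : ℝ} (hμ : 0 < μ)
    (ha : 0 < a) (hT : 0 < T) :
    Tendsto (fun p : ℝ => p ^ (1 / μ) * ∫ x in (0 : ℝ)..T, exp (-(p * a) * x ^ μ)) atTop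
      (𝓝 (a ^ (-1 / μ) * Gamma (1 / μ + 1))) := by
  have hint : IntegrableOn (fun y : ℝ => exp (-a * y ^ μ)) (Ioi 0) := by
    simpa using integrableOn_rpow_mul_exp_neg_mul_rpow (s := 0) (by norm_num) hμ ha
  have hupper : Tendsto (fun p : ℝ => p ^ (1 / μ) * T) atTop atTop :=
    (tendsto_rpow_atTop (by positivity)).atTop_mul_const hT
  rw [← integral_exp_neg_mul_rpow hμ ha]
  refine (intervalIntegral_tendsto_integral_Ioi 0 hint hupper).congr' ?_
  filter_upwards [eventually_gt_atTop 0] with p hp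
  have hc : 0 < p ^ (1 / μ) := rpow_pos_of_pos hp _
  have hsubst : ∀ x ∈ uIcc 0 T, exp (-(p * a) * x ^ μ) = exp (-a * (p ^ (1 / μ) * x) ^ μ) := by
    intro x hx
    rw [uIcc_of_le hT.le] at hx
    rw [mul_rpow hc.le hx.1, ← rpow_mul hp.le, one_div_mul_cancel hμ.ne', rpow_one]
    ring_nf
  rw [intervalIntegral.integral_congr hsubst, intervalIntegral.integral_comp_mul_left
    (fun y => exp (-a * y ^ μ)) hc.ne', smul_eq_mul, mul_zero, ← mul_assoc,
    mul_inv_cancel₀ hc.ne', one_mul]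

lemma tendsto_rpow_mul_nhds_one (r y : ℝ) : Tendsto (fun c : ℝ => c ^ r * y) (𝓝 1) (𝓝 y) := by
  simpa using ((continuousAt_rpow_const 1 r (Or.inl one_ne_zero)).mul_const y).tendsto

section LocalComparison

variable {g : ℝ → ℝ} {μ c : ℝ}

lemma eventually_mul_rpow_lt_of_tendsto
    (hglim : Tendsto (fun x => x ^ (-μ) * g x) (𝓝[>] 0) (𝓝 1)) (hc : c < 1) :
    ∀ᶠ x in 𝓝[>] 0, c * x ^ μ < g x := by
  filter_upwards [hglim.eventually_const_lt hc, self_mem_nhdsWithin] with x hx hx0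
  rwa [rpow_neg hx0.le, ← div_eq_inv_mul, lt_div_iff₀ (rpow_pos_of_pos hx0 μ)] at hx

lemma eventually_lt_mul_rpow_of_tendsto
    (hglim : Tendsto (fun x => x ^ (-μ) * g x) (𝓝[>] 0) (𝓝 1)) (hc : 1 < c) :
    ∀ᶠ x in 𝓝[>] 0, g x < c * x ^ μ := by
  filter_upwards [hglim.eventually_lt_const hc, self_mem_nhdsWithin] with x hx hx0
  rwa [rpow_neg hx0.le, ← div_eq_inv_mul, div_lt_iff₀ (rpow_pos_of_pos hx0 μ)] at hx

end LocalComparison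

section LaplaceIntegral

variable {g : ℝ → ℝ} {L μ c p : ℝ}

lemma exists_le_mul_rpow_on_Ioc (hglim : Tendsto (fun x => x ^ (-μ) * g x) (𝓝[>] 0) (𝓝 1))
    (hc : 1 < c) (hL : 0 < L) : ∃ δ ∈ Ioc 0 L, ∀ x ∈ Ioc 0 δ, g x ≤ c * x ^ μ := by
  obtain ⟨δ, hδ, hsub⟩ :=
    mem_nhdsGT_iff_exists_Ioc_subset.1 (eventually_lt_mul_rpow_of_tendsto hglim hc)
  exact ⟨min δ L, ⟨lt_min hδ hL, min_le_right _ _⟩,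
    fun x hx => (hsub ⟨hx.1, hx.2.trans (min_le_left _ _)⟩).le⟩

lemma exists_pos_forall_mul_rpow_le_or_le (hg : ContinuousOn g (Icc 0 L))
    (hgpos : ∀ x ∈ Ioc 0 L, 0 < g x)
    (hglim : Tendsto (fun x => x ^ (-μ) * g x) (𝓝[>] 0) (𝓝 1)) (hc : c < 1) :
    ∃ m > 0, ∀ x ∈ Ioc 0 L, c * x ^ μ ≤ g x ∨ m ≤ g x := by
  obtain ⟨δ, hδ, hsub⟩ :=
    mem_nhdsGT_iff_exists_Ioc_subset.1 (eventually_mul_rpow_lt_of_tendsto hglim hc)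
  obtain ⟨m, hm, hmg⟩ := isCompact_Icc.exists_forall_le'
    (hg.mono (Icc_subset_Icc_left (mem_Ioi.1 hδ).le))
    fun x hx => hgpos x ⟨(mem_Ioi.1 hδ).trans_le hx.1, hx.2⟩
  refine ⟨m, hm, fun x hx => ?_⟩
  rcases le_or_gt x δ with hxδ | hδx
  · exact Or.inl (hsub ⟨hx.1, hxδ⟩).le
  · exact Or.inr (hmg x ⟨hδx.le, hx.2⟩)

lemma intervalIntegral_exp_neg_mul_rpow_le_setIntegral {δ : ℝ} (hμ : 0 ≤ μ) (hp : 0 ≤ p)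
    (hδ : 0 ≤ δ) (hδL : δ ≤ L) (hint : IntegrableOn (fun x => exp (-p * g x)) (Icc 0 L))
    (hgle : ∀ x ∈ Ioc 0 δ, g x ≤ c * x ^ μ) :
    ∫ x in (0 : ℝ)..δ, exp (-(p * c) * x ^ μ) ≤ ∫ x in Icc 0 L, exp (-p * g x) := by
  have hsub : Ioc 0 δ ⊆ Icc 0 L := Ioc_subset_Icc_self.trans (Icc_subset_Icc_right hδL)
  rw [intervalIntegral.integral_of_le hδ]
  calc ∫ x in Ioc 0 δ, exp (-(p * c) * x ^ μ)
      ≤ ∫ x in Ioc 0 δ, exp (-p * g x) := by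
        refine setIntegral_mono_on ?_ (hint.mono_set hsub) measurableSet_Ioc fun x hx => ?_
        · exact (continuous_const.mul (continuous_rpow_const hμ)).rexp.integrableOn_Ioc
        · exact exp_le_exp.2 (by nlinarith [mul_le_mul_of_nonneg_left (hgle x hx) hp])
    _ ≤ ∫ x in Icc 0 L, exp (-p * g x) :=
        setIntegral_mono_set hint (ae_of_all _ fun x => (exp_pos _).le) hsub.eventuallyLE

lemma setIntegral_exp_neg_mul_le {m : ℝ} (hμ : 0 ≤ μ) (hp : 0 ≤ p) (hL : 0 ≤ L)
    (hint : IntegrableOn (fun x => exp (-p * g x)) (Icc 0 L))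
    (hg : ∀ x ∈ Ioc 0 L, c * x ^ μ ≤ g x ∨ m ≤ g x) :
    ∫ x in Icc 0 L, exp (-p * g x) ≤
      (∫ x in (0 : ℝ)..L, exp (-(p * c) * x ^ μ)) + L * exp (-p * m) := by
  have hmodel : IntegrableOn (fun x => exp (-(p * c) * x ^ μ)) (Ioc 0 L) :=
    (continuous_const.mul (continuous_rpow_const hμ)).rexp.integrableOn_Ioc
  have hconst : IntegrableOn (fun _ => exp (-p * m)) (Ioc 0 L) := continuous_const.integrableOn_Ioc
  rw [integral_Icc_eq_integral_Ioc, intervalIntegral.integral_of_le hL]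
  calc ∫ x in Ioc 0 L, exp (-p * g x)
      ≤ ∫ x in Ioc 0 L, (exp (-(p * c) * x ^ μ) + exp (-p * m)) := by
        refine setIntegral_mono_on (hint.mono_set Ioc_subset_Icc_self)
          (hmodel.add hconst) measurableSet_Ioc fun x hx => ?_
        rcases hg x hx with h | h
        · exact le_add_of_le_of_nonneg
            (exp_le_exp.2 (by nlinarith [mul_le_mul_of_nonneg_left h hp])) (exp_pos _).le
        · exact le_add_of_nonneg_of_le (exp_pos _).le
            (exp_le_exp.2 (by nlinarith [mul_le_mul_of_nonneg_left h hp]))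
    _ = (∫ x in Ioc 0 L, exp (-(p * c) * x ^ μ)) + L * exp (-p * m) := by
        rw [integral_add hmodel hconst, setIntegral_const,
          volume_real_Ioc_of_le hL, sub_zero, smul_eq_mul]

lemma eventually_lt_rpow_mul_setIntegral_exp_neg_mul (hL : 0 < L) (hμ : 0 < μ)
    (hg : ContinuousOn g (Icc 0 L))
    (hglim : Tendsto (fun x => x ^ (-μ) * g x) (𝓝[>] 0) (𝓝 1)) {a : ℝ}
    (ha : a < Gamma (1 / μ + 1)) :
    ∀ᶠ p in atTop, a < p ^ (1 / μ) * ∫ x in Icc 0 L, exp (-p * g x) := by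
  obtain ⟨c, hac, hc⟩ := ((((tendsto_rpow_mul_nhds_one (-1 / μ) _).mono_left
    nhdsWithin_le_nhds).eventually_const_lt ha).and (self_mem_nhdsWithin (s := Ioi 1))).exists
  obtain ⟨δ, ⟨hδ, hδL⟩, hgle⟩ := exists_le_mul_rpow_on_Ioc hglim hc hL
  filter_upwards [(tendsto_rpow_inv_mul_intervalIntegral_exp_neg_mul_rpow hμ
    (zero_lt_one.trans hc) hδ).eventually_const_lt hac, eventually_ge_atTop 0] with p hlt hp
  refine hlt.trans_le (mul_le_mul_of_nonneg_left ?_ (rpow_nonneg hp _))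
  exact intervalIntegral_exp_neg_mul_rpow_le_setIntegral hμ.le hp hδ.le hδL
    ((continuousOn_const.mul hg).rexp.integrableOn_compact isCompact_Icc) hgle

lemma eventually_rpow_mul_setIntegral_exp_neg_mul_lt (hL : 0 < L) (hμ : 0 < μ)
    (hg : ContinuousOn g (Icc 0 L)) (hgpos : ∀ x ∈ Ioc 0 L, 0 < g x)
    (hglim : Tendsto (fun x => x ^ (-μ) * g x) (𝓝[>] 0) (𝓝 1)) {b : ℝ}
    (hb : Gamma (1 / μ + 1) < b) :
    ∀ᶠ p in atTop, p ^ (1 / μ) * ∫ x in Icc 0 L, exp (-p * g x) < b := by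
  obtain ⟨c, hcb, hc⟩ := ((((tendsto_rpow_mul_nhds_one (-1 / μ) _).mono_left
    nhdsWithin_le_nhds).eventually_lt_const hb).and (Ioo_mem_nhdsLT zero_lt_one)).exists
  obtain ⟨m, hm, hgm⟩ := exists_pos_forall_mul_rpow_le_or_le hg hgpos hglim hc.2
  have hdecay : Tendsto (fun p : ℝ => p ^ (1 / μ) * (L * exp (-p * m))) atTop (𝓝 0) := by
    simpa [mul_left_comm, mul_comm m] using
      (tendsto_rpow_mul_exp_neg_mul_atTop_nhds_zero (1 / μ) m hm).const_mul L
  have hupper := (tendsto_rpow_inv_mul_intervalIntegral_exp_neg_mul_rpow hμ hc.1 hL).add hdecay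
  rw [add_zero] at hupper
  filter_upwards [hupper.eventually_lt_const hcb, eventually_ge_atTop 0] with p hlt hp
  refine lt_of_le_of_lt ?_ hlt
  rw [← mul_add]
  exact mul_le_mul_of_nonneg_left (setIntegral_exp_neg_mul_le hμ.le hp hL.le
    ((continuousOn_const.mul hg).rexp.integrableOn_compact isCompact_Icc) hgm) (rpow_nonneg hp _)

end LaplaceIntegral

theorem laplace_asymptotics_gamma (L μ : ℝ) (hL : 0 < L) (hμ : 0 < μ)
    (g : ℝ → ℝ) (hg : ContinuousOn g (Set.Icc 0 L))
    (hgpos : ∀ x ∈ Set.Ioc 0 L, 0 < g x)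
    (hglim : Filter.Tendsto (fun x => x ^ (-μ) * g x)
      (nhdsWithin 0 (Set.Ioi 0)) (nhds 1)) :
    Filter.Tendsto
      (fun p : ℝ => p ^ (1 / μ) * ∫ x in Set.Icc (0:ℝ) L, Real.exp (-p * g x))
      Filter.atTop (nhds (Real.Gamma (1 / μ + 1))) :=
  tendsto_order.2 ⟨fun _ ha => eventually_lt_rpow_mul_setIntegral_exp_neg_mul hL hμ hg hglim ha,
    fun _ hb => eventually_rpow_mul_setIntegral_exp_neg_mul_lt hL hμ hg hgpos hglim hb⟩
end
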